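/- arXiv:1608.08268 — 11 statements merged into one kernel-verified Lean document; each statement's English description precedes it below -/
import Mathlib

section
/- γ₀ = 0 if and only if there exists ξ ∈ ℝ such that α = ξ · ΣΣᵀ(1,−c)ᵀ. (This is the well-posedness direction of the main theorem: the Cauchy–Schwarz inequality κ ≤ σ_Z·‖Σ⁻¹α‖ holds with equality exactly when Σᵀ(1,−c)ᵀ and Σ⁻¹α are linearly dependent with the correct sign, which under κ > 0 is exactly the stated proportionality.) -/
open Matrix Real Set Filter

/-- Euclidean inner product on `ℝ²`. -/
noncomputable def dot2 (a b : Fin 2 → ℝ) : ℝ := a 0 * b 0 + a 1 * b 1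

/-- Euclidean norm on `ℝ²`. -/
noncomputable def nrm2 (a : Fin 2 → ℝ) : ℝ := Real.sqrt (dot2 a a)

/-- Hyperbolic cotangent. -/
noncomputable def coth (x : ℝ) : ℝ := Real.cosh x / Real.sinh x

lemma scalar_key (w0 w1 p q : ℝ) (hW : 0 < w0*w0 + w1*w1)
    (hκ : 0 < -(w0*p + w1*q)) :
    1 - (-(w0*p + w1*q) / (Real.sqrt (w0*w0 + w1*w1) * Real.sqrt (p*p + q*q)))^2 = 0 ↔
      ∃ ξ : ℝ, p = ξ*w0 ∧ q = ξ*w1 := by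
  have hU0 : (0:ℝ) ≤ p*p + q*q := by nlinarith [sq_nonneg p, sq_nonneg q]
  constructor
  · intro h
    have hne : Real.sqrt (w0*w0+w1*w1) * Real.sqrt (p*p+q*q) ≠ 0 := by
      intro h0; rw [h0, div_zero] at h; norm_num at h
    have h2 : (-(w0*p+w1*q))^2 / (Real.sqrt (w0*w0+w1*w1) * Real.sqrt (p*p+q*q))^2 = 1 := by
      rw [← div_pow]; linarith
    have h1 : (-(w0*p+w1*q))^2 = (Real.sqrt (w0*w0+w1*w1) * Real.sqrt (p*p+q*q))^2 := by
      rw [div_eq_one_iff_eq (pow_ne_zero 2 hne)] at h2; linarith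
    have hκ2 : (-(w0*p+w1*q))^2 = (w0*w0+w1*w1)*(p*p+q*q) := by
      rw [h1, mul_pow, Real.sq_sqrt hW.le, Real.sq_sqrt hU0]
    have hcross : w0*q - w1*p = 0 := by
      have h3 : (w0*q - w1*p)^2 = 0 := by linear_combination -hκ2
      exact pow_eq_zero_iff (two_ne_zero) |>.mp h3
    refine ⟨(w0*p+w1*q)/(w0*w0+w1*w1), ?_, ?_⟩
    · rw [div_mul_eq_mul_div, eq_div_iff hW.ne']
      linear_combination (-w1) * hcross
    · rw [div_mul_eq_mul_div, eq_div_iff hW.ne']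
      linear_combination w0 * hcross
  · rintro ⟨ξ, rfl, rfl⟩
    have hξ : ξ < 0 := by nlinarith
    have hUval : Real.sqrt (ξ*w0*(ξ*w0) + ξ*w1*(ξ*w1))
        = -ξ * Real.sqrt (w0*w0 + w1*w1) := by
      rw [show ξ*w0*(ξ*w0) + ξ*w1*(ξ*w1) = (-ξ)^2 * (w0*w0+w1*w1) by ring,
        Real.sqrt_mul (by positivity), Real.sqrt_sq (by linarith)]
    rw [hUval]
    have hden : Real.sqrt (w0*w0+w1*w1) * (-ξ * Real.sqrt (w0*w0+w1*w1))
        = -(ξ*(w0*w0+w1*w1)) := by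
      linear_combination (-ξ) * Real.mul_self_sqrt hW.le
    rw [hden]
    have hnum : -(w0*(ξ*w0) + w1*(ξ*w1)) = -(ξ*(w0*w0+w1*w1)) := by ring
    have hd0 : -(ξ*(w0*w0+w1*w1)) ≠ 0 := by nlinarith
    rw [hnum, div_self hd0]; norm_num

/-- `γ₀ = 0` iff the well-posedness (proportionality) condition holds. -/
theorem stmt_3 (σ₁ σ₂ ρ c α₁ α₂ : ℝ)
    (hσ₁ : 0 < σ₁) (hσ₂ : 0 < σ₂) (hρ₁ : -1 < ρ) (hρ₂ : ρ < 1)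
    (S : Matrix (Fin 2) (Fin 2) ℝ)
    (hS : S = !![σ₁, 0; σ₂ * ρ, σ₂ * Real.sqrt (1 - ρ ^ 2)])
    (α : Fin 2 → ℝ) (hα : α = ![α₁, α₂])
    (κ : ℝ) (hκdef : κ = c * α₂ - α₁) (hκ : 0 < κ)
    (σZ : ℝ) (hσZ : σZ = nrm2 (Sᵀ *ᵥ ![1, -c]))
    (γ₀ : ℝ) (hγ₀ : γ₀ = 1 - (κ / (σZ * nrm2 (S⁻¹ *ᵥ α))) ^ 2) :
    γ₀ = 0 ↔ ∃ ξ : ℝ, α = ξ • ((S * Sᵀ) *ᵥ ![1, -c]) := by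
  have hρs : (0:ℝ) < 1 - ρ^2 := by nlinarith
  set s := Real.sqrt (1 - ρ^2) with hsdef
  have hs : 0 < s := Real.sqrt_pos.mpr hρs
  have hs2 : s^2 = 1 - ρ^2 := Real.sq_sqrt hρs.le
  subst hS hα hκdef hσZ hγ₀
  have hw : (!![σ₁, 0; σ₂*ρ, σ₂*s])ᵀ *ᵥ ![1, -c] = ![σ₁ - c*(σ₂*ρ), -(c*(σ₂*s))] := by
    funext i; fin_cases i <;>
      simp [Matrix.mulVec, dotProduct, Fin.sum_univ_two] <;> ring
  have hSinv : (!![σ₁, 0; σ₂*ρ, σ₂*s])⁻¹ = !![1/σ₁, 0; -(ρ/(σ₁*s)), 1/(σ₂*s)] := by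
    apply Matrix.inv_eq_right_inv
    ext i j; fin_cases i <;> fin_cases j <;>
      simp [Matrix.mul_apply, Fin.sum_univ_two] <;> field_simp <;> ring
  have hu : (!![(1:ℝ)/σ₁, 0; -(ρ/(σ₁*s)), 1/(σ₂*s)]) *ᵥ ![α₁, α₂]
      = ![α₁/σ₁, -(ρ/(σ₁*s))*α₁ + α₂/(σ₂*s)] := by
    funext i; fin_cases i <;>
      simp [Matrix.mulVec, dotProduct, Fin.sum_univ_two] <;> ring
  have hm : ((!![σ₁, 0; σ₂*ρ, σ₂*s]) * (!![σ₁, 0; σ₂*ρ, σ₂*s])ᵀ) *ᵥ ![1, -c]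
      = ![σ₁*(σ₁ - c*(σ₂*ρ)), σ₂*ρ*(σ₁ - c*(σ₂*ρ)) + σ₂*s*(-(c*(σ₂*s)))] := by
    funext i; fin_cases i <;>
      simp [Matrix.mulVec, dotProduct, Matrix.mul_apply, Matrix.transpose_apply,
        Matrix.vecHead, Matrix.vecTail, Fin.sum_univ_two] <;> ring
  rw [hw, hSinv, hu, hm]
  have hn1 : nrm2 ![σ₁ - c*(σ₂*ρ), -(c*(σ₂*s))]
      = Real.sqrt ((σ₁ - c*(σ₂*ρ))*(σ₁ - c*(σ₂*ρ)) + -(c*(σ₂*s)) * -(c*(σ₂*s))) := by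
    simp [nrm2, dot2]
  have hn2 : nrm2 ![α₁/σ₁, -(ρ/(σ₁*s))*α₁ + α₂/(σ₂*s)]
      = Real.sqrt ((α₁/σ₁)*(α₁/σ₁) +
          (-(ρ/(σ₁*s))*α₁ + α₂/(σ₂*s)) * (-(ρ/(σ₁*s))*α₁ + α₂/(σ₂*s))) := by
    simp [nrm2, dot2]
  rw [hn1, hn2]
  have hW : 0 < (σ₁ - c*(σ₂*ρ))*(σ₁ - c*(σ₂*ρ)) + -(c*(σ₂*s)) * -(c*(σ₂*s)) := by
    nlinarith [sq_nonneg (ρ*σ₁ - c*σ₂), mul_pos hρs (mul_pos hσ₁ hσ₁), hs2, sq_nonneg (c*σ₂)]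
  have hnum : c*α₂ - α₁
      = -((σ₁ - c*(σ₂*ρ))*(α₁/σ₁) + -(c*(σ₂*s)) * (-(ρ/(σ₁*s))*α₁ + α₂/(σ₂*s))) := by
    field_simp
    ring
  have hκ' : 0 < -((σ₁ - c*(σ₂*ρ))*(α₁/σ₁) + -(c*(σ₂*s)) * (-(ρ/(σ₁*s))*α₁ + α₂/(σ₂*s))) := by
    rw [← hnum]; exact hκ
  rw [hnum, scalar_key _ _ _ _ hW hκ']
  constructor
  · rintro ⟨ξ, h1, h2⟩
    have hσs : σ₁ * s ≠ 0 := by positivity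
    field_simp at h1 h2
    have e1 : α₁ = ξ * (σ₁*(σ₁ - c*(σ₂*ρ))) := by linear_combination h1
    have e2 : α₂ = ξ * (σ₂*ρ*(σ₁ - c*(σ₂*ρ)) + σ₂*s*(-(c*(σ₂*s)))) := by
      have key : α₂ * (σ₁*s)
          = (ξ * (σ₂*ρ*(σ₁ - c*(σ₂*ρ)) + σ₂*s*(-(c*(σ₂*s))))) * (σ₁*s) := by
        linear_combination s*h2 + ρ*(σ₂*s)*e1
      exact mul_right_cancel₀ hσs key
    refine ⟨ξ, ?_⟩
    funext i; fin_cases i <;> simp [Pi.smul_apply, smul_eq_mul]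
    · linear_combination e1
    · linear_combination e2
  · rintro ⟨ξ, hv⟩
    have h1 : α₁ = ξ * (σ₁*(σ₁ - c*(σ₂*ρ))) := by
      have := congrFun hv 0; simpa [smul_eq_mul] using this
    have h2 : α₂ = ξ * (σ₂*ρ*(σ₁ - c*(σ₂*ρ)) + σ₂*s*(-(c*(σ₂*s)))) := by
      have := congrFun hv 1; simpa [smul_eq_mul] using this
    refine ⟨ξ, ?_, ?_⟩
    · rw [h1]; field_simp
    · rw [h1, h2]; field_simp; ring
end

section
/- The optimal strategy is market-neutral exactly under the well-posedness condition: for every function h : [0,T] → ℝ, the feedback strategy π*(z,t) := z·[(1/γ)(ΣΣᵀ)⁻¹α + h(T−t)·(1,−c)ᵀ] satisfies π*₂(z,t) = −c·π*₁(z,t) for all t ∈ [0,T] and all z ∈ ℝ if and only if there exists ξ ∈ ℝ such that α = ξ·ΣΣᵀ(1,−c)ᵀ. -/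
open Matrix Real Set Filter

/-- for every `h`, the feedback strategy
`π*(z,t) = z·[(1/γ)(ΣΣᵀ)⁻¹α + h(T−t)·(1,−c)ᵀ]` is market-neutral
(`π*₂ = −c·π*₁` for all `t ∈ [0,T]`, `z ∈ ℝ`) iff `α = ξ·ΣΣᵀ(1,−c)ᵀ` for some `ξ`. -/
theorem stmt_4 (σ₁ σ₂ ρ c α₁ α₂ γ T : ℝ)
    (hσ₁ : 0 < σ₁) (hσ₂ : 0 < σ₂) (hρ₁ : -1 < ρ) (hρ₂ : ρ < 1)
    (S : Matrix (Fin 2) (Fin 2) ℝ)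
    (hS : S = !![σ₁, 0; σ₂ * ρ, σ₂ * Real.sqrt (1 - ρ ^ 2)])
    (α : Fin 2 → ℝ) (hα : α = ![α₁, α₂])
    (hγ0 : 0 < γ) (hγ1 : γ < 1) (hT : 0 < T) :
    ∀ h : ℝ → ℝ,
      ((∀ t ∈ Set.Icc (0 : ℝ) T, ∀ z : ℝ,
          (z • (γ⁻¹ • ((S * Sᵀ)⁻¹ *ᵥ α) + h (T - t) • ![1, -c])) 1
            = -c * (z • (γ⁻¹ • ((S * Sᵀ)⁻¹ *ᵥ α) + h (T - t) • ![1, -c])) 0)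
        ↔ ∃ ξ : ℝ, α = ξ • ((S * Sᵀ) *ᵥ ![1, -c])) := by
  intro h
  set M := S * Sᵀ with hM
  have hsq : 0 < 1 - ρ ^ 2 := by nlinarith
  have hdetS : S.det = σ₁ * (σ₂ * Real.sqrt (1 - ρ ^ 2)) := by
    rw [hS, Matrix.det_fin_two_of]; ring
  have hdet : IsUnit M.det := by
    rw [hM, Matrix.det_mul, Matrix.det_transpose, hdetS]
    have : Real.sqrt (1 - ρ ^ 2) > 0 := Real.sqrt_pos.mpr hsq
    exact (isUnit_iff_ne_zero).mpr (by positivity)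
  set v := M⁻¹ *ᵥ α with hv
  have hMv : M *ᵥ v = α := by
    rw [hv, Matrix.mulVec_mulVec, Matrix.mul_nonsing_inv _ hdet, Matrix.one_mulVec]
  constructor
  · intro hcond
    have h0 := hcond 0 ⟨le_refl 0, le_of_lt hT⟩ 1
    simp only [Pi.smul_apply, Pi.add_apply, one_smul, smul_eq_mul] at h0
    have hv1 : v 1 = -c * v 0 := by
      have hγne : γ⁻¹ ≠ 0 := inv_ne_zero (ne_of_gt hγ0)
      have h1 : (![1, -c] : Fin 2 → ℝ) 1 = -c := rfl
      have h2 : (![1, -c] : Fin 2 → ℝ) 0 = 1 := rfl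
      rw [h1, h2] at h0
      field_simp at h0 ⊢
      nlinarith [h0]
    refine ⟨v 0, ?_⟩
    have hveq : v = v 0 • ![1, -c] := by
      funext i
      fin_cases i
      · simp
      · simp [hv1]; ring
    calc α = M *ᵥ v := hMv.symm
      _ = M *ᵥ (v 0 • ![1, -c]) := by rw [← hveq]
      _ = v 0 • (M *ᵥ ![1, -c]) := by rw [Matrix.mulVec_smul]
  · rintro ⟨ξ, hξ⟩ t _ z
    have hveq : v = ξ • ![1, -c] := by
      rw [hv, hξ, Matrix.mulVec_smul, Matrix.mulVec_mulVec,
        Matrix.nonsing_inv_mul _ hdet, Matrix.one_mulVec]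
    show (z • (γ⁻¹ • v + h (T - t) • ![1, -c])) 1
        = -c * (z • (γ⁻¹ • v + h (T - t) • ![1, -c])) 0
    rw [hveq]
    simp only [Pi.smul_apply, Pi.add_apply, smul_eq_mul]
    have h1 : (![1, -c] : Fin 2 → ℝ) 1 = -c := rfl
    have h2 : (![1, -c] : Fin 2 → ℝ) 0 = 1 := rfl
    rw [h1, h2]; ring
end

section
/- Assume 𝔇 > 0. Define h(0) := 0 and, for t > 0, h(t) := ξ‖a‖² / (−(a·b) + √𝔇 · coth(t√𝔇)). Then the denominator never vanishes on (0,∞), h is differentiable on [0,∞), and h solves the Riccati IVP on [0,∞): h′(t) = 2(a·b)h(t) + ‖b‖²h(t)² + ξ‖a‖² for all t ≥ 0, with h(0) = 0. -/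
open Matrix Real Set Filter

/-- explicit solution of the Riccati IVP when `𝔇 > 0`. -/
theorem stmt_5 (a b : Fin 2 → ℝ) (ξ : ℝ) (hab : dot2 a b < 0) (hξ : ξ ≠ 0)
    (D : ℝ) (hD : D = (dot2 a b) ^ 2 - ξ * (nrm2 a) ^ 2 * (nrm2 b) ^ 2) (hDpos : 0 < D)
    (h : ℝ → ℝ) (hh0 : h 0 = 0)
    (hh : ∀ t : ℝ, 0 < t →
      h t = ξ * (nrm2 a) ^ 2 / (-(dot2 a b) + Real.sqrt D * coth (t * Real.sqrt D))) :
    (∀ t : ℝ, 0 < t → -(dot2 a b) + Real.sqrt D * coth (t * Real.sqrt D) ≠ 0) ∧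
    (∀ t ∈ Set.Ici (0 : ℝ),
      HasDerivWithinAt h (2 * dot2 a b * h t + (nrm2 b) ^ 2 * (h t) ^ 2 + ξ * (nrm2 a) ^ 2)
        (Set.Ici 0) t) := by
  set α := dot2 a b with hα
  set A := ξ * (nrm2 a) ^ 2 with hA
  set s := Real.sqrt D with hs
  have hspos : 0 < s := Real.sqrt_pos.mpr hDpos
  have hs2 : s ^ 2 = D := Real.sq_sqrt hDpos.le
  have hBA : (nrm2 b) ^ 2 * A = α ^ 2 - s ^ 2 := by
    rw [hs2, hD, hA]; ring
  -- denominator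
  set den : ℝ → ℝ := fun t => -α * Real.sinh (t * s) + s * Real.cosh (t * s) with hden
  have den_pos : ∀ t : ℝ, 0 ≤ t → 0 < den t := by
    intro t ht
    have h1 : 0 ≤ Real.sinh (t * s) := by
      rw [← Real.sinh_zero]
      exact Real.sinh_le_sinh.mpr (by positivity)
    have h2 : 0 < Real.cosh (t * s) := Real.cosh_pos _
    have h3 := mul_nonneg (neg_nonneg.mpr hab.le) h1
    have h4 := mul_pos hspos h2
    simp only [hden]
    linarith
  -- first part
  have part1 : ∀ t : ℝ, 0 < t → -α + s * coth (t * s) ≠ 0 := by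
    intro t ht
    have hsh : 0 < Real.sinh (t * s) := by
      rw [← Real.sinh_zero]
      exact Real.sinh_lt_sinh.mpr (by positivity)
    have : 0 < -α + s * coth (t * s) := by
      have : 0 < s * (Real.cosh (t * s) / Real.sinh (t * s)) := by
        apply mul_pos hspos
        exact div_pos (Real.cosh_pos _) hsh
      unfold coth
      linarith
    linarith
  refine ⟨part1, ?_⟩
  -- smooth version g
  set g : ℝ → ℝ := fun t => A * Real.sinh (t * s) / den t with hg
  have heq : ∀ t ∈ Set.Ici (0 : ℝ), h t = g t := by
    intro t ht
    rcases eq_or_lt_of_le (Set.mem_Ici.mp ht) with rfl | ht'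
    · simp [hg, hh0]
    · have hsh : 0 < Real.sinh (t * s) := by
        rw [← Real.sinh_zero]
        exact Real.sinh_lt_sinh.mpr (by positivity)
      have hdpos := den_pos t ht'.le
      rw [hh t ht', hg]
      simp only [hden, coth]
      field_simp
  intro t ht
  have htt : (0:ℝ) ≤ t := ht
  have hdpos := den_pos t htt
  have hdne : den t ≠ 0 := ne_of_gt hdpos
  -- derivative of g at t
  have hsinh : HasDerivAt (fun t : ℝ => Real.sinh (t * s)) (Real.cosh (t * s) * s) t := by
    have := (Real.hasDerivAt_sinh (t * s)).comp t ((hasDerivAt_id t).mul_const s)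
    simpa [Function.comp_def] using this
  have hcosh : HasDerivAt (fun t : ℝ => Real.cosh (t * s)) (Real.sinh (t * s) * s) t := by
    have := (Real.hasDerivAt_cosh (t * s)).comp t ((hasDerivAt_id t).mul_const s)
    simpa [Function.comp_def] using this
  have hnum : HasDerivAt (fun t : ℝ => A * Real.sinh (t * s)) (A * (Real.cosh (t * s) * s)) t :=
    hsinh.const_mul A
  have hdenD : HasDerivAt den (-α * (Real.cosh (t * s) * s) + s * (Real.sinh (t * s) * s)) t := by
    exact (hsinh.const_mul (-α)).add (hcosh.const_mul s)
  have hgD : HasDerivAt g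
      ((A * (Real.cosh (t * s) * s) * den t -
        A * Real.sinh (t * s) * (-α * (Real.cosh (t * s) * s) + s * (Real.sinh (t * s) * s))) /
        (den t) ^ 2) t := hnum.div hdenD hdne
  have hval : (A * (Real.cosh (t * s) * s) * den t -
        A * Real.sinh (t * s) * (-α * (Real.cosh (t * s) * s) + s * (Real.sinh (t * s) * s))) /
        (den t) ^ 2 = 2 * α * h t + (nrm2 b) ^ 2 * (h t) ^ 2 + A := by
    have hdval : den t = -α * Real.sinh (t * s) + s * Real.cosh (t * s) := rfl
    rw [heq t ht, hg]
    have hch := Real.cosh_sq_sub_sinh_sq (t * s)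
    field_simp
    rw [hdval]
    linear_combination (-(A * Real.sinh (t*s)^2)) * hBA
  exact ((hval ▸ hgD).hasDerivWithinAt).congr heq (heq t ht)
end

section
/- Assume 𝔇 < 0. Define h(t) := −(√(−𝔇)/‖b‖²) · tan( arctan(−(a·b)/√(−𝔇)) − t√(−𝔇) ) − (a·b)/‖b‖². Then for every t ∈ [0, T_esc) the argument of tan lies in (−π/2, π/2) so h is well defined and differentiable on [0, T_esc), h(0) = 0, and h solves the Riccati IVP on [0, T_esc): h′(t) = 2(a·b)h(t) + ‖b‖²h(t)² + ξ‖a‖². -/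
open Matrix Real Set Filter

/-- explicit solution of the Riccati IVP on `[0, T_esc)` when `𝔇 < 0`. -/
theorem stmt_7 (a b : Fin 2 → ℝ) (ξ : ℝ) (hab : dot2 a b < 0) (hξ : ξ ≠ 0)
    (D : ℝ) (hD : D = (dot2 a b) ^ 2 - ξ * (nrm2 a) ^ 2 * (nrm2 b) ^ 2) (hDneg : D < 0)
    (Tesc : ℝ)
    (hTesc : Tesc = (1 / Real.sqrt (-D)) *
      (π / 2 + Real.arctan (-(dot2 a b) / Real.sqrt (-D))))
    (h : ℝ → ℝ)
    (hh : ∀ t : ℝ, h t =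
      -(Real.sqrt (-D) / (nrm2 b) ^ 2) *
        Real.tan (Real.arctan (-(dot2 a b) / Real.sqrt (-D)) - t * Real.sqrt (-D))
      - dot2 a b / (nrm2 b) ^ 2) :
    (∀ t ∈ Set.Ico (0 : ℝ) Tesc,
      Real.arctan (-(dot2 a b) / Real.sqrt (-D)) - t * Real.sqrt (-D) ∈
        Set.Ioo (-(π / 2)) (π / 2)) ∧
    h 0 = 0 ∧
    (∀ t ∈ Set.Ico (0 : ℝ) Tesc,
      HasDerivWithinAt h (2 * dot2 a b * h t + (nrm2 b) ^ 2 * (h t) ^ 2 + ξ * (nrm2 a) ^ 2)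
        (Set.Ico 0 Tesc) t) := by
  set p := dot2 a b with hp
  set s := Real.sqrt (-D) with hs
  set θ := Real.arctan (-p / s) with hθ
  set B := (nrm2 b) ^ 2 with hBdef
  set A := (nrm2 a) ^ 2 with hAdef
  have hspos : 0 < s := Real.sqrt_pos.2 (by linarith)
  have hs2 : s ^ 2 = -D := Real.sq_sqrt (by linarith)
  have hBnn : 0 ≤ B := sq_nonneg _
  have hAnn : 0 ≤ A := sq_nonneg _
  have hkey : s ^ 2 = ξ * A * B - p ^ 2 := by rw [hs2, hD]; ring
  have hBne : B ≠ 0 := by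
    intro h0
    rw [h0] at hkey
    nlinarith [sq_nonneg p, sq_nonneg s]
  have hθlt : θ < π / 2 := Real.arctan_lt_pi_div_two _
  have hθgt : -(π / 2) < θ := Real.neg_pi_div_two_lt_arctan _
  have mem : ∀ t ∈ Set.Ico (0 : ℝ) Tesc, θ - t * s ∈ Set.Ioo (-(π / 2)) (π / 2) := by
    rintro t ⟨ht0, htT⟩
    constructor
    · rw [hTesc, one_div_mul_eq_div] at htT
      have := (lt_div_iff₀ hspos).1 htT
      linarith
    · nlinarith [mul_nonneg ht0 hspos.le]
  refine ⟨mem, ?_, ?_⟩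
  · rw [hh 0]
    rw [show θ - 0 * s = θ by ring, hθ, Real.tan_arctan]
    field_simp
    ring
  · intro t ht
    have hu := mem t ht
    have hcos : Real.cos (θ - t * s) ≠ 0 :=
      (Real.cos_pos_of_mem_Ioo hu).ne'
    have h1 : HasDerivAt (fun t : ℝ => θ - t * s) (-s) t := by
      simpa using ((hasDerivAt_id t).mul_const s).const_sub θ
    have h2 : HasDerivAt (fun t : ℝ => Real.tan (θ - t * s))
        (1 / Real.cos (θ - t * s) ^ 2 * (-s)) t :=
      by have := (Real.hasDerivAt_tan hcos).comp t h1; exact this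
    have h3 : HasDerivAt h (-(s / B) * (1 / Real.cos (θ - t * s) ^ 2 * (-s))) t := by
      have heq : h = fun t : ℝ => -(s / B) * Real.tan (θ - t * s) - p / B := funext hh
      rw [heq]
      exact (h2.const_mul _).sub_const _
    have htan : 1 / Real.cos (θ - t * s) ^ 2 = Real.tan (θ - t * s) ^ 2 + 1 := by
      rw [Real.tan_eq_sin_div_cos]
      field_simp
      exact (Real.sin_sq_add_cos_sq _).symm
    have hval : -(s / B) * (1 / Real.cos (θ - t * s) ^ 2 * (-s)) =
        2 * p * h t + B * (h t) ^ 2 + ξ * A := by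
      rw [htan, hh t]
      field_simp
      linear_combination hkey
    rw [← hval]
    exact h3.hasDerivWithinAt
end

section
/- Let 0 < T and T ≤ T_esc, and let h : [0,T) → ℝ be differentiable with h(0) = 0 and h′(t) = 2(a·b)h(t) + ‖b‖²h(t)² + ξ‖a‖² for all t ∈ [0,T). If ξ > 0, then h is strictly increasing on [0,T) and h(t) > 0 for every t ∈ (0,T). -/
open Matrix Real Set Filter

private lemma dot2_self_pos {a b : Fin 2 → ℝ} (hab : dot2 a b < 0) : 0 < dot2 a a := by
  rcases lt_or_ge 0 (dot2 a a) with hlt | hle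
  · exact hlt
  · exfalso
    unfold dot2 at hle hab
    have h0 : a 0 ^ 2 = 0 :=
      le_antisymm (by nlinarith [sq_nonneg (a 1)]) (sq_nonneg _)
    have h1 : a 1 ^ 2 = 0 :=
      le_antisymm (by nlinarith [sq_nonneg (a 0)]) (sq_nonneg _)
    have h0' : a 0 = 0 := by
      have := sq_nonneg (a 0); nlinarith [sq_abs (a 0), abs_nonneg (a 0)]
    have h1' : a 1 = 0 := by
      have := sq_nonneg (a 1); nlinarith [sq_abs (a 1), abs_nonneg (a 1)]
    rw [h0', h1'] at hab; norm_num at hab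

/-- if `ξ > 0`, any solution of the Riccati IVP on `[0,T)` with `T ≤ T_esc`
is strictly increasing and strictly positive on `(0,T)`. -/
theorem stmt_8 (a b : Fin 2 → ℝ) (ξ : ℝ) (hab : dot2 a b < 0) (hξ : 0 < ξ)
    (D : ℝ) (hD : D = (dot2 a b) ^ 2 - ξ * (nrm2 a) ^ 2 * (nrm2 b) ^ 2)
    (T : ℝ) (hT : 0 < T)
    (hTesc : D < 0 → T ≤ (1 / Real.sqrt (-D)) *
      (π / 2 + Real.arctan (-(dot2 a b) / Real.sqrt (-D))))
    (h : ℝ → ℝ) (hh0 : h 0 = 0)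
    (hderiv : ∀ t ∈ Set.Ico (0 : ℝ) T,
      HasDerivWithinAt h (2 * dot2 a b * h t + (nrm2 b) ^ 2 * (h t) ^ 2 + ξ * (nrm2 a) ^ 2)
        (Set.Ico 0 T) t) :
    StrictMonoOn h (Set.Ico 0 T) ∧ ∀ t ∈ Set.Ioo (0 : ℝ) T, 0 < h t := by
  clear hD hTesc
  have hba : dot2 b a < 0 := by unfold dot2 at hab ⊢; linarith
  have hna : 0 < (nrm2 a) ^ 2 := by
    rw [nrm2, Real.sq_sqrt (dot2_self_pos hab).le]; exact dot2_self_pos hab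
  have hnb : 0 < (nrm2 b) ^ 2 := by
    rw [nrm2, Real.sq_sqrt (dot2_self_pos hba).le]; exact dot2_self_pos hba
  set ab := dot2 a b with hab_def
  set na2 := (nrm2 a) ^ 2 with hna_def
  set nb2 := (nrm2 b) ^ 2 with hnb_def
  set Q : ℝ → ℝ := fun x => 2 * ab * x + nb2 * x ^ 2 + ξ * na2 with hQ_def
  have hderiv' : ∀ t ∈ Set.Ico (0 : ℝ) T,
      HasDerivWithinAt h (Q (h t)) (Set.Ico 0 T) t := hderiv
  have hcont : ContinuousOn h (Set.Ico 0 T) :=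
    fun t ht => (hderiv' t ht).continuousWithinAt
  have hQ0 : Q 0 = ξ * na2 := by simp [hQ_def]
  -- Key claim: the derivative stays positive on [0, T).
  have key : ∀ t ∈ Set.Ico (0 : ℝ) T, 0 < Q (h t) := by
    by_contra hk
    push_neg at hk
    obtain ⟨t1, ht1, hQt1⟩ := hk
    set S : Set ℝ := {t ∈ Set.Icc (0 : ℝ) t1 | Q (h t) ≤ 0} with hS_def
    have hKsub : Set.Icc (0 : ℝ) t1 ⊆ Set.Ico 0 T :=
      fun x hx => ⟨hx.1, lt_of_le_of_lt hx.2 ht1.2⟩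
    have hhK : ContinuousOn h (Set.Icc 0 t1) := hcont.mono hKsub
    have hcontK : ContinuousOn (fun t => Q (h t)) (Set.Icc 0 t1) := by
      show ContinuousOn (fun t => 2 * ab * h t + nb2 * (h t) ^ 2 + ξ * na2) _
      exact ((continuousOn_const.mul hhK).add (continuousOn_const.mul (hhK.pow 2))).add
        continuousOn_const
    have hSclosed : IsClosed S := by
      have : S = Set.Icc 0 t1 ∩ (fun t => Q (h t)) ⁻¹' Set.Iic 0 := by
        ext x; simp [hS_def, Set.mem_sep_iff]
      rw [this]
      exact hcontK.preimage_isClosed_of_isClosed isClosed_Icc isClosed_Iic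
    have hSne : S.Nonempty := ⟨t1, ⟨ht1.1, le_refl _⟩, hQt1⟩
    have hSbdd : BddBelow S := ⟨0, fun x hx => hx.1.1⟩
    set t0 := sInf S with ht0_def
    have ht0S : t0 ∈ S := hSclosed.csInf_mem hSne hSbdd
    have ht0K : t0 ∈ Set.Icc (0 : ℝ) t1 := ht0S.1
    have hQt0 : Q (h t0) ≤ 0 := ht0S.2
    have ht0T : t0 < T := lt_of_le_of_lt ht0K.2 ht1.2
    have ht0pos : 0 < t0 := by
      rcases eq_or_lt_of_le ht0K.1 with heq | hlt
      · exfalso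
        rw [← heq, hh0, hQ0] at hQt0
        nlinarith
      · exact hlt
    have hmin : ∀ t ∈ Set.Ico (0 : ℝ) t0, 0 < Q (h t) := by
      intro t ht
      by_contra hle
      push_neg at hle
      have htS : t ∈ S := ⟨⟨ht.1, le_trans ht.2.le ht0K.2⟩, hle⟩
      exact absurd (csInf_le hSbdd htS) (not_le.2 ht.2)
    have hsub0 : Set.Icc (0 : ℝ) t0 ⊆ Set.Ico 0 T :=
      fun x hx => ⟨hx.1, lt_of_le_of_lt hx.2 ht0T⟩
    have hDA : ∀ x ∈ Set.Ioo (0 : ℝ) t0, HasDerivAt h (Q (h x)) x := by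
      intro x hx
      have hxT : x ∈ Set.Ico (0 : ℝ) T := ⟨hx.1.le, lt_trans hx.2 ht0T⟩
      exact (hderiv' x hxT).hasDerivAt (Ico_mem_nhds hx.1 hxT.2)
    have hmono : MonotoneOn h (Set.Icc 0 t0) := by
      apply monotoneOn_of_deriv_nonneg (convex_Icc _ _) (hcont.mono hsub0)
      · rw [interior_Icc]
        exact fun x hx => ((hDA x hx).differentiableAt).differentiableWithinAt
      · rw [interior_Icc]
        intro x hx
        rw [(hDA x hx).deriv]
        exact (hmin x ⟨hx.1.le, hx.2⟩).le
    have hρnn : 0 ≤ h t0 := by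
      have := hmono ⟨le_refl 0, ht0pos.le⟩ ⟨ht0pos.le, le_refl t0⟩ ht0pos.le
      rwa [hh0] at this
    have hρpos : 0 < h t0 := by
      rcases eq_or_lt_of_le hρnn with heq | hlt
      · exfalso; rw [← heq, hQ0] at hQt0; nlinarith
      · exact hlt
    set C : ℝ := -(2 * ab) with hC_def
    have hC : 0 < C := by simp [hC_def]; linarith
    set u : ℝ → ℝ := fun t => (h t0 - h t) * Real.exp (C * t) with hu_def
    have huDA : ∀ x ∈ Set.Ioo (0 : ℝ) t0, HasDerivAt u
        ((0 - Q (h x)) * Real.exp (C * x) + (h t0 - h x) * (Real.exp (C * x) * (C * 1))) x := by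
      intro x hx
      exact ((hasDerivAt_const x (h t0)).sub (hDA x hx)).mul
        (((hasDerivAt_id x).const_mul C).exp)
    have humono : MonotoneOn u (Set.Icc 0 t0) := by
      apply monotoneOn_of_deriv_nonneg (convex_Icc _ _)
      · show ContinuousOn (fun t => (h t0 - h t) * Real.exp (C * t)) _
        exact (continuousOn_const.sub (hcont.mono hsub0)).mul
          ((Real.continuous_exp.comp (continuous_const.mul continuous_id)).continuousOn)
      · rw [interior_Icc]
        exact fun x hx => ((huDA x hx).differentiableAt).differentiableWithinAt
      · rw [interior_Icc]
        intro x hx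
        rw [(huDA x hx).deriv]
        have hx0 : 0 ≤ h x := by
          have := hmono ⟨le_refl 0, ht0pos.le⟩ ⟨hx.1.le, hx.2.le⟩ hx.1.le
          rwa [hh0] at this
        have hxρ : h x ≤ h t0 :=
          hmono ⟨hx.1.le, hx.2.le⟩ ⟨ht0pos.le, le_refl t0⟩ hx.2.le
        have hE : 0 < Real.exp (C * x) := Real.exp_pos _
        have hQle : Q (h x) ≤ (h t0 - h x) * C := by
          show 2 * ab * h x + nb2 * (h x) ^ 2 + ξ * na2 ≤ (h t0 - h x) * -(2 * ab)
          have hQρ : 2 * ab * h t0 + nb2 * (h t0) ^ 2 + ξ * na2 ≤ 0 := hQt0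
          nlinarith [mul_nonneg (sub_nonneg.2 hxρ)
            (mul_nonneg hnb.le (add_nonneg hx0 hρnn))]
        nlinarith
    have hcontr := humono ⟨le_refl 0, ht0pos.le⟩ ⟨ht0pos.le, le_refl t0⟩ ht0pos.le
    have hu0 : u 0 = h t0 := by simp [hu_def, hh0]
    have hut0 : u t0 = 0 := by simp [hu_def]
    rw [hu0, hut0] at hcontr
    linarith
  -- Conclude.
  have hsm : StrictMonoOn h (Set.Ico 0 T) := by
    apply strictMonoOn_of_deriv_pos (convex_Ico 0 T) hcont
    rw [interior_Ico]
    intro x hx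
    have hxT : x ∈ Set.Ico (0 : ℝ) T := ⟨hx.1.le, hx.2⟩
    have : HasDerivAt h (Q (h x)) x :=
      (hderiv' x hxT).hasDerivAt (Ico_mem_nhds hx.1 hx.2)
    rw [this.deriv]
    exact key x hxT
  refine ⟨hsm, fun t ht => ?_⟩
  have := hsm ⟨le_refl 0, hT⟩ ⟨ht.1.le, ht.2⟩ ht.1
  rwa [hh0] at this
end

section
/- Let 0 < T ≤ +∞ and let h : [0,T) → ℝ be differentiable with h(0) = 0 and h′(t) = 2(a·b)h(t) + ‖b‖²h(t)² + ξ‖a‖² for all t ∈ [0,T). If ξ < 0 (in which case 𝔇 > 0 automatically), then h is strictly decreasing on [0,T) and h(t) < 0 for every t ∈ (0,T). -/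
open Matrix Real Set Filter

/-- if `ξ < 0` (in which case `𝔇 > 0` automatically), any solution of the
Riccati IVP on `[0,T)` (with `0 < T ≤ +∞`) is strictly decreasing and strictly negative
on `(0,T)`. -/
theorem stmt_9 (a b : Fin 2 → ℝ) (ξ : ℝ) (hab : dot2 a b < 0) (hξ : ξ < 0)
    (D : ℝ) (hD : D = (dot2 a b) ^ 2 - ξ * (nrm2 a) ^ 2 * (nrm2 b) ^ 2)
    (T : EReal) (hT : 0 < T)
    (h : ℝ → ℝ) (hh0 : h 0 = 0)
    (hderiv : ∀ t : ℝ, 0 ≤ t → (t : EReal) < T →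
      HasDerivWithinAt h (2 * dot2 a b * h t + (nrm2 b) ^ 2 * (h t) ^ 2 + ξ * (nrm2 a) ^ 2)
        {s : ℝ | 0 ≤ s ∧ (s : EReal) < T} t) :
    0 < D ∧ StrictAntiOn h {s : ℝ | 0 ≤ s ∧ (s : EReal) < T} ∧
      ∀ t : ℝ, 0 < t → (t : EReal) < T → h t < 0 := by
  set S : Set ℝ := {s : ℝ | 0 ≤ s ∧ (s : EReal) < T} with hS
  -- positivity of the squared norms
  have hdaa : 0 ≤ dot2 a a := by
    simp only [dot2]; nlinarith [sq_nonneg (a 0), sq_nonneg (a 1)]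
  have hdbb : 0 ≤ dot2 b b := by
    simp only [dot2]; nlinarith [sq_nonneg (b 0), sq_nonneg (b 1)]
  have hna : (nrm2 a) ^ 2 = dot2 a a := Real.sq_sqrt hdaa
  have hnb : (nrm2 b) ^ 2 = dot2 b b := Real.sq_sqrt hdbb
  have hapos : 0 < dot2 a a := by
    rcases lt_or_eq_of_le hdaa with h' | h'
    · exact h'
    · exfalso
      simp only [dot2] at h' hab
      nlinarith [sq_nonneg (a 0 * b 1 - a 1 * b 0), sq_nonneg (b 0), sq_nonneg (b 1),
        mul_pos (neg_pos.2 hab) (neg_pos.2 hab)]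
  have hbpos : 0 < dot2 b b := by
    rcases lt_or_eq_of_le hdbb with h' | h'
    · exact h'
    · exfalso
      simp only [dot2] at h' hab
      nlinarith [sq_nonneg (a 0 * b 1 - a 1 * b 0), sq_nonneg (a 0), sq_nonneg (a 1),
        mul_pos (neg_pos.2 hab) (neg_pos.2 hab)]
  have hBpos : 0 < (nrm2 b) ^ 2 := by rw [hnb]; exact hbpos
  have hAneg : ξ * (nrm2 a) ^ 2 < 0 := by
    rw [hna]; exact mul_neg_of_neg_of_pos hξ hapos
  have hDpos : 0 < D := by
    rw [hD, hna, hnb]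
    nlinarith [mul_pos hapos hbpos, sq_nonneg (dot2 a b)]
  refine ⟨hDpos, ?_⟩
  -- the right-hand side function (exactly as in `hderiv`)
  set g : ℝ → ℝ :=
    fun t => 2 * dot2 a b * h t + (nrm2 b) ^ 2 * (h t) ^ 2 + ξ * (nrm2 a) ^ 2 with hg
  have hderiv' : ∀ t : ℝ, 0 ≤ t → (t : EReal) < T → HasDerivWithinAt h (g t) S t :=
    fun t h1 h2 => hderiv t h1 h2
  have hg0 : g 0 = ξ * (nrm2 a) ^ 2 := by simp [hg, hh0]
  -- continuity of h and g on S
  have hcontS : ContinuousOn h S := fun t ht => (hderiv' t ht.1 ht.2).continuousWithinAt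
  have hcontgS : ContinuousOn g S := by
    apply ContinuousOn.add
    apply ContinuousOn.add
    · exact continuousOn_const.mul hcontS
    · exact continuousOn_const.mul (hcontS.pow 2)
    · exact continuousOn_const
  have hIccS : ∀ τ : ℝ, (τ : EReal) < T → Icc 0 τ ⊆ S := by
    intro τ hτ x hx
    exact ⟨hx.1, lt_of_le_of_lt (EReal.coe_le_coe_iff.2 hx.2) hτ⟩
  -- derivative of g within Iic u at points 0 < u < T
  have hgderivIic : ∀ u : ℝ, 0 < u → (u : EReal) < T →
      HasDerivWithinAt g ((2 * (nrm2 b) ^ 2 * h u + 2 * dot2 a b) * g u) (Iic u) u := by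
    intro u hu huT
    have hu' : HasDerivWithinAt h (g u) S u := hderiv' u (le_of_lt hu) huT
    have hgd := (((hu'.const_mul (2 * dot2 a b))).add
      ((hu'.pow 2).const_mul ((nrm2 b) ^ 2))).add_const (ξ * (nrm2 a) ^ 2)
    have hgd' : HasDerivWithinAt g ((2 * (nrm2 b) ^ 2 * h u + 2 * dot2 a b) * g u) S u := by
      refine HasDerivWithinAt.congr_deriv hgd ?_
      push_cast
      ring
    apply hgd'.mono_of_mem_nhdsWithin
    obtain ⟨r, hur, hrT⟩ := EReal.exists_between_coe_real huT
    rw [mem_nhdsWithin]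
    refine ⟨Ioo 0 r, isOpen_Ioo, ⟨hu, by exact_mod_cast hur⟩, ?_⟩
    rintro x ⟨⟨hx0, hxr⟩, _⟩
    exact ⟨le_of_lt hx0, lt_trans (EReal.coe_lt_coe_iff.2 hxr) hrT⟩
  -- Main claim: g is negative on S
  have hgneg : ∀ τ ∈ S, g τ < 0 := by
    intro τ hτ
    by_contra hge
    push_neg at hge
    have hτ0 : 0 ≤ τ := hτ.1
    have hsub : Icc (0:ℝ) τ ⊆ S := hIccS τ hτ.2
    have hcont : ContinuousOn g (Icc 0 τ) := hcontgS.mono hsub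
    have hmem : (0:ℝ) ∈ Icc (g 0) (g τ) := ⟨by rw [hg0]; linarith, hge⟩
    obtain ⟨t₀, ht₀mem, ht₀⟩ := intermediate_value_Icc hτ0 hcont hmem
    have ht₀T : (t₀ : EReal) < T := lt_of_le_of_lt (EReal.coe_le_coe_iff.2 ht₀mem.2) hτ.2
    have hsub₀ : Icc (0:ℝ) t₀ ⊆ S := hIccS t₀ ht₀T
    -- bound on the coefficient
    obtain ⟨K, hK⟩ := (isCompact_Icc (a := (0:ℝ)) (b := t₀)).exists_bound_of_continuousOn
      (((continuousOn_const.mul (hcontS.mono hsub₀)).add continuousOn_const :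
        ContinuousOn (fun t => 2 * (nrm2 b) ^ 2 * h t + 2 * dot2 a b) (Icc 0 t₀)))
    set K' : ℝ := max K 0 with hK'
    set F : ℝ → ℝ := fun s => g (t₀ - s) with hF
    have hmaps : MapsTo (fun s => t₀ - s) (Icc 0 t₀) (Icc 0 t₀) := by
      intro x hx
      simp only [mem_Icc] at hx ⊢
      constructor <;> linarith [hx.1, hx.2]
    have hFcont : ContinuousOn F (Icc 0 t₀) :=
      (hcontgS.mono hsub₀).comp (continuousOn_const.sub continuousOn_id) hmaps
    have hFd : ∀ s ∈ Ico 0 t₀, HasDerivWithinAt F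
        (-((2 * (nrm2 b) ^ 2 * h (t₀ - s) + 2 * dot2 a b) * g (t₀ - s))) (Ici s) s := by
      intro s hs
      have hupos : 0 < t₀ - s := by linarith [hs.1, hs.2]
      have huT : (↑(t₀ - s) : EReal) < T := by
        refine lt_of_le_of_lt (EReal.coe_le_coe_iff.2 ?_) ht₀T
        linarith [hs.1]
      have hgd := hgderivIic (t₀ - s) hupos huT
      have hφ : HasDerivWithinAt (fun s : ℝ => t₀ - s) (-1) (Ici s) s :=
        (hasDerivWithinAt_id s (Ici s)).const_sub t₀
      have hmaps' : MapsTo (fun x : ℝ => t₀ - x) (Ici s) (Iic (t₀ - s)) := by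
        intro x hx
        simp only [mem_Iic]
        simp only [mem_Ici] at hx
        linarith
      have hcomp := HasDerivWithinAt.comp s hgd hφ hmaps'
      refine HasDerivWithinAt.congr_deriv hcomp ?_
      ring
    have hbound : ∀ s ∈ Ico 0 t₀,
        ‖-((2 * (nrm2 b) ^ 2 * h (t₀ - s) + 2 * dot2 a b) * g (t₀ - s))‖ ≤ K' * ‖F s‖ + 0 := by
      intro s hs
      have humem : t₀ - s ∈ Icc 0 t₀ := ⟨by linarith [hs.2], by linarith [hs.1]⟩
      have h1 := hK (t₀ - s) humem
      have h2 : ‖2 * (nrm2 b) ^ 2 * h (t₀ - s) + 2 * dot2 a b‖ ≤ K' :=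
        le_trans h1 (le_max_left _ _)
      rw [add_zero, norm_neg, norm_mul]
      exact mul_le_mul_of_nonneg_right h2 (norm_nonneg _)
    have hF0 : ‖F 0‖ ≤ 0 := by
      simp only [hF, sub_zero, ht₀, norm_zero, le_refl]
    have hfin := norm_le_gronwallBound_of_norm_deriv_right_le hFcont hFd hF0 hbound t₀
      ⟨ht₀mem.1, le_refl t₀⟩
    rw [sub_zero, gronwallBound_ε0_δ0] at hfin
    have hFt₀ : F t₀ = ξ * (nrm2 a) ^ 2 := by simp [hF, hg0]
    rw [hFt₀] at hfin
    have habs : |ξ * (nrm2 a) ^ 2| ≤ 0 := hfin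
    rw [abs_of_neg hAneg] at habs
    linarith
  -- S is convex
  have hconv : Convex ℝ S := by
    rw [convex_iff_ordConnected]
    constructor
    rintro x ⟨hx0, hxT⟩ y ⟨hy0, hyT⟩ z ⟨hzx, hzy⟩
    exact ⟨le_trans hx0 hzx, lt_of_le_of_lt (EReal.coe_le_coe_iff.2 hzy) hyT⟩
  have hanti : StrictAntiOn h S := by
    apply strictAntiOn_of_deriv_neg hconv hcontS
    intro x hx
    have hxS : x ∈ S := interior_subset hx
    have hda : HasDerivAt h (g x) x :=
      (hderiv' x hxS.1 hxS.2).hasDerivAt (mem_interior_iff_mem_nhds.1 hx)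
    rw [hda.deriv]
    exact hgneg x hxS
  refine ⟨hanti, fun t ht htT => ?_⟩
  have h0S : (0:ℝ) ∈ S := ⟨le_refl 0, by exact_mod_cast hT⟩
  have htS : t ∈ S := ⟨le_of_lt ht, htT⟩
  have := hanti h0S htS ht
  rwa [hh0] at this
end

section
/- Let 0 < T < T_esc, let h : [0,T] → ℝ be differentiable with h(0) = 0 and h′(t) = 2(a·b)h(t) + ‖b‖²h(t)² + ξ‖a‖² on [0,T], and set g(t) := (‖b‖²/2)·∫₀ᵗ h(s) ds. Then the function φ(z,t) := exp( g(T−t) + (1/2)·h(T−t)·z² ) satisfies the linear parabolic PDE ∂ₜφ(z,t) + (a·b)·z·∂_zφ(z,t) + (1/2)‖b‖²·∂²_{zz}φ(z,t) + (ξ/2)‖a‖²·z²·φ(z,t) = 0 for all (z,t) ∈ ℝ × [0,T), together with the terminal condition φ(z,T) = 1 for all z ∈ ℝ. -/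
open Matrix Real Set Filter

/-- the exponential-quadratic ansatz built from a Riccati solution solves
the linear parabolic PDE with terminal condition `φ(z,T) = 1`. -/
theorem stmt_12 (a b : Fin 2 → ℝ) (ξ : ℝ) (hab : dot2 a b < 0) (hξ : ξ ≠ 0)
    (D : ℝ) (hD : D = (dot2 a b) ^ 2 - ξ * (nrm2 a) ^ 2 * (nrm2 b) ^ 2)
    (T : ℝ) (hT : 0 < T)
    (hTesc : D < 0 → T < (1 / Real.sqrt (-D)) *
      (π / 2 + Real.arctan (-(dot2 a b) / Real.sqrt (-D))))
    (h : ℝ → ℝ) (hh0 : h 0 = 0)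
    (hderiv : ∀ t ∈ Set.Icc (0 : ℝ) T,
      HasDerivWithinAt h (2 * dot2 a b * h t + (nrm2 b) ^ 2 * (h t) ^ 2 + ξ * (nrm2 a) ^ 2)
        (Set.Icc 0 T) t)
    (g : ℝ → ℝ) (hg : ∀ t : ℝ, g t = ((nrm2 b) ^ 2 / 2) * ∫ s in (0 : ℝ)..t, h s)
    (φ : ℝ → ℝ → ℝ)
    (hφ : ∀ z t : ℝ, φ z t = Real.exp (g (T - t) + (1 / 2) * h (T - t) * z ^ 2)) :
    (∀ z : ℝ, ∀ t ∈ Set.Ico (0 : ℝ) T,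
      derivWithin (fun s => φ z s) (Set.Icc 0 T) t
        + dot2 a b * z * deriv (fun w => φ w t) z
        + (1 / 2) * (nrm2 b) ^ 2 * deriv (deriv (fun w => φ w t)) z
        + (ξ / 2) * (nrm2 a) ^ 2 * z ^ 2 * φ z t = 0) ∧
    (∀ z : ℝ, φ z T = 1) := by
  constructor
  · intro z t ht
    set A := dot2 a b with hA
    set B := (nrm2 b) ^ 2 with hB
    set C := (nrm2 a) ^ 2 with hC
    obtain ⟨ht0, htT⟩ := ht
    set τ := T - t with hτdef
    have hτ : τ ∈ Set.Icc (0 : ℝ) T := ⟨by linarith, by linarith⟩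
    have htmem : t ∈ Set.Icc (0 : ℝ) T := ⟨ht0, htT.le⟩
    have hcont : ContinuousOn h (Set.Icc 0 T) := fun x hx =>
      (hderiv x hx).continuousWithinAt
    -- derivative of s ↦ T - s within Icc
    have hsub : HasDerivWithinAt (fun s : ℝ => T - s) (-1) (Set.Icc 0 T) t := by
      simpa using ((hasDerivWithinAt_id t (Set.Icc 0 T)).const_sub T)
    have hmaps : Set.MapsTo (fun s : ℝ => T - s) (Set.Icc 0 T) (Set.Icc 0 T) := by
      intro x hx
      show T - x ∈ Set.Icc (0:ℝ) T
      exact ⟨by linarith [hx.2], by linarith [hx.1]⟩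
    -- derivative of h(T - s)
    have hhτ : HasDerivWithinAt (fun s => h (T - s))
        (-(2 * A * h τ + B * (h τ) ^ 2 + ξ * C)) (Set.Icc 0 T) t := by
      have := HasDerivWithinAt.comp t (hderiv τ hτ) hsub hmaps
      simpa [Function.comp_def] using this.congr_deriv (by ring)
    -- FTC : derivative of the integral
    haveI : Fact (τ ∈ Set.Icc (0 : ℝ) T) := ⟨hτ⟩
    have hint : IntervalIntegrable h MeasureTheory.volume 0 τ := by
      apply ContinuousOn.intervalIntegrable
      apply hcont.mono
      rw [Set.uIcc_of_le hτ.1]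
      exact Set.Icc_subset_Icc le_rfl hτ.2
    have hmeas : StronglyMeasurableAtFilter h (nhdsWithin τ (Set.Icc 0 T)) :=
      hcont.stronglyMeasurableAtFilter_nhdsWithin measurableSet_Icc τ
    have hF : HasDerivWithinAt (fun u => ∫ s in (0:ℝ)..u, h s) (h τ) (Set.Icc 0 T) τ :=
      intervalIntegral.integral_hasDerivWithinAt_right hint hmeas (hcont τ hτ)
    have hgτ : HasDerivWithinAt (fun s => g (T - s)) (-(B / 2 * h τ)) (Set.Icc 0 T) t := by
      have h1 : HasDerivWithinAt (fun s => (B / 2) * ∫ u in (0:ℝ)..(T - s), h u)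
          ((B / 2) * (h τ * (-1))) (Set.Icc 0 T) t :=
        (HasDerivWithinAt.comp t hF hsub hmaps).const_mul (B / 2)
      have h2 : (fun s => (B / 2) * ∫ u in (0:ℝ)..(T - s), h u) = fun s => g (T - s) := by
        funext s; rw [hg (T - s)]
      rw [h2] at h1
      simpa using h1.congr_deriv (by ring)
    -- time derivative of φ z
    have hφt : HasDerivWithinAt (fun s => φ z s)
        (Real.exp (g τ + 1 / 2 * h τ * z ^ 2) *
          (-(B / 2 * h τ) + -(2 * A * h τ + B * (h τ) ^ 2 + ξ * C) * (1 / 2 * z ^ 2)))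
        (Set.Icc 0 T) t := by
      have heq : (fun s => φ z s) =
          fun s => Real.exp (g (T - s) + 1 / 2 * h (T - s) * z ^ 2) := by
        funext s; exact hφ z s
      rw [heq]
      have hin : HasDerivWithinAt (fun s => g (T - s) + 1 / 2 * h (T - s) * z ^ 2)
          (-(B / 2 * h τ) + -(2 * A * h τ + B * (h τ) ^ 2 + ξ * C) * (1 / 2 * z ^ 2))
          (Set.Icc 0 T) t := by
        have h2 : HasDerivWithinAt (fun s => 1 / 2 * h (T - s) * z ^ 2)
            (-(2 * A * h τ + B * (h τ) ^ 2 + ξ * C) * (1 / 2 * z ^ 2))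
            (Set.Icc 0 T) t := by
          have := (hhτ.const_mul (1/2 : ℝ)).mul_const (z ^ 2)
          simpa using this.congr_deriv (by ring)
        exact hgτ.add h2
      exact hin.exp
    have hud : UniqueDiffWithinAt ℝ (Set.Icc (0:ℝ) T) t := (uniqueDiffOn_Icc hT) t htmem
    have hDW : derivWithin (fun s => φ z s) (Set.Icc 0 T) t =
        Real.exp (g τ + 1 / 2 * h τ * z ^ 2) *
          (-(B / 2 * h τ) + -(2 * A * h τ + B * (h τ) ^ 2 + ξ * C) * (1 / 2 * z ^ 2)) :=
      hφt.derivWithin hud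
    -- space derivatives
    have hEz : ∀ w : ℝ, HasDerivAt (fun w => Real.exp (g τ + 1 / 2 * h τ * w ^ 2))
        (Real.exp (g τ + 1 / 2 * h τ * w ^ 2) * (h τ * w)) w := by
      intro w
      have hq : HasDerivAt (fun w : ℝ => g τ + 1 / 2 * h τ * w ^ 2) (h τ * w) w := by
        have := ((hasDerivAt_pow 2 w).const_mul (1 / 2 * h τ)).const_add (g τ)
        simpa using this.congr_deriv (by ring)
      exact hq.exp
    have heqw : (fun w => φ w t) = fun w => Real.exp (g τ + 1 / 2 * h τ * w ^ 2) := by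
      funext w; exact hφ w t
    have hd1 : deriv (fun w => φ w t) =
        fun w => Real.exp (g τ + 1 / 2 * h τ * w ^ 2) * (h τ * w) := by
      funext w; rw [heqw]; exact (hEz w).deriv
    have hd2 : deriv (deriv (fun w => φ w t)) z =
        Real.exp (g τ + 1 / 2 * h τ * z ^ 2) * (h τ * z) * (h τ * z) +
          Real.exp (g τ + 1 / 2 * h τ * z ^ 2) * h τ := by
      rw [hd1]
      have : HasDerivAt (fun w => Real.exp (g τ + 1 / 2 * h τ * w ^ 2) * (h τ * w))
          (Real.exp (g τ + 1 / 2 * h τ * z ^ 2) * (h τ * z) * (h τ * z) +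
            Real.exp (g τ + 1 / 2 * h τ * z ^ 2) * h τ) z := by
        have hmul := (hEz z).mul ((hasDerivAt_id z).const_mul (h τ))
        simpa [Pi.mul_def] using hmul.congr_deriv (by simp only [id_eq]; ring)
      exact this.deriv
    have hd1z : deriv (fun w => φ w t) z =
        Real.exp (g τ + 1 / 2 * h τ * z ^ 2) * (h τ * z) := by rw [hd1]
    rw [hDW, hd2, hd1z, hφ z t, ← hτdef]
    ring
  · intro z
    rw [hφ z T]
    simp [hh0, hg]
end

section
/- The explicit candidate value function solves the Hamilton–Jacobi–Bellman equation: for every (x,z,t) ∈ (0,∞) × ℝ × [0,T), one has L^π v(x,z,t) ≤ 0 for all π ∈ ℝ², with equality when π = π*(z,t) := z·[(1/γ)(ΣΣᵀ)⁻¹α + h(T−t)·(1,−c)ᵀ]; that is, sup_{π∈ℝ²} L^π v(x,z,t) = 0 and the supremum is attained at π*(z,t). Moreover v(x,z,T) = (x^{1−γ} − 1)/(1−γ) for all x > 0, z ∈ ℝ. -/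
open Matrix Real Set Filter Topology

lemma hjb_aux (σ₁ σ₂ ρ c α₁ α₂ γ hs z : ℝ) (Q : ℝ → ℝ → ℝ)
    (hσ₁ : σ₁ ≠ 0) (hσ₂ : σ₂ ≠ 0) (hρq : (0:ℝ) < 1 - ρ^2) (hγ0 : 0 < γ)
    (hQ : ∀ p0 p1 : ℝ, Q p0 p1 =
      z^2*((c*α₂-α₁)*hs) - z^2*(γ/2*(σ₁^2 - 2*c*(σ₁*σ₂*ρ) + c^2*σ₂^2)*hs^2)
      - z^2*((α₁^2/σ₁^2 + (σ₁*α₂ - σ₂*ρ*α₁)^2/(σ₁^2*σ₂^2*(1-ρ^2)))/(2*γ))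
      + z*(α₁*p0+α₂*p1)
      - γ/2*(p0*(σ₁^2*p0+σ₁*σ₂*ρ*p1)+p1*(σ₁*σ₂*ρ*p0+σ₂^2*p1))
      + γ*hs*z*((σ₁^2*p0+σ₁*σ₂*ρ*p1) - c*(σ₁*σ₂*ρ*p0+σ₂^2*p1))) :
    (∀ p0 p1 : ℝ, Q p0 p1 ≤ 0) ∧
    Q (z*((σ₂^2*α₁ - σ₁*σ₂*ρ*α₂)/(σ₁^2*σ₂^2*(1-ρ^2))/γ + hs))
      (z*((σ₁^2*α₂ - σ₁*σ₂*ρ*α₁)/(σ₁^2*σ₂^2*(1-ρ^2))/γ - c*hs)) = 0 := by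
  have hident : ∀ p0 p1 : ℝ, Q p0 p1 =
      -(γ/2)*((σ₁*(p0 - z*((σ₂^2*α₁ - σ₁*σ₂*ρ*α₂)/(σ₁^2*σ₂^2*(1-ρ^2))/γ + hs))
          + σ₂*ρ*(p1 - z*((σ₁^2*α₂ - σ₁*σ₂*ρ*α₁)/(σ₁^2*σ₂^2*(1-ρ^2))/γ - c*hs)))^2
        + σ₂^2*(1-ρ^2)*(p1 - z*((σ₁^2*α₂ - σ₁*σ₂*ρ*α₁)/(σ₁^2*σ₂^2*(1-ρ^2))/γ - c*hs))^2) := by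
    intro p0 p1
    rw [hQ]
    have h1 : (1:ℝ) - ρ^2 ≠ 0 := ne_of_gt hρq
    have h2 : γ ≠ 0 := ne_of_gt hγ0
    field_simp
    ring
  constructor
  · intro p0 p1
    rw [hident]
    have h1 : 0 ≤ (σ₁*(p0 - z*((σ₂^2*α₁ - σ₁*σ₂*ρ*α₂)/(σ₁^2*σ₂^2*(1-ρ^2))/γ + hs))
          + σ₂*ρ*(p1 - z*((σ₁^2*α₂ - σ₁*σ₂*ρ*α₁)/(σ₁^2*σ₂^2*(1-ρ^2))/γ - c*hs)))^2
        + σ₂^2*(1-ρ^2)*(p1 - z*((σ₁^2*α₂ - σ₁*σ₂*ρ*α₁)/(σ₁^2*σ₂^2*(1-ρ^2))/γ - c*hs))^2 :=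
      add_nonneg (sq_nonneg _) (mul_nonneg (mul_nonneg (sq_nonneg σ₂) hρq.le) (sq_nonneg _))
    nlinarith [mul_nonneg hγ0.le h1]
  · rw [hident]
    ring
set_option maxHeartbeats 2000000 in
/-- the explicit candidate value function solves the HJB equation:
`L^π v ≤ 0` for all `π`, with equality at `π* (z,t)`, plus the terminal condition. -/
theorem stmt_14 (σ₁ σ₂ ρ c α₁ α₂ γ T : ℝ)
    (hσ₁ : 0 < σ₁) (hσ₂ : 0 < σ₂) (hρ₁ : -1 < ρ) (hρ₂ : ρ < 1)
    (S : Matrix (Fin 2) (Fin 2) ℝ)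
    (hS : S = !![σ₁, 0; σ₂ * ρ, σ₂ * Real.sqrt (1 - ρ ^ 2)])
    (α : Fin 2 → ℝ) (hα : α = ![α₁, α₂])
    (κ : ℝ) (hκdef : κ = c * α₂ - α₁) (hκ : 0 < κ)
    (σZ : ℝ) (hσZ : σZ = nrm2 (Sᵀ *ᵥ ![1, -c]))
    (M : ℝ) (hM : M = nrm2 (S⁻¹ *ᵥ α))
    (hγ0 : 0 < γ) (hγ1 : γ < 1) (hT : 0 < T)
    (h : ℝ → ℝ) (hh0 : h 0 = 0)
    (hderiv : ∀ t ∈ Set.Icc (0 : ℝ) T,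
      HasDerivWithinAt h (-(2 * κ / γ) * h t + σZ ^ 2 * (h t) ^ 2 + (1 - γ) * M ^ 2 / γ ^ 2)
        (Set.Icc 0 T) t)
    (g : ℝ → ℝ) (hg : ∀ t : ℝ, g t = (σZ ^ 2 / 2) * ∫ s in (0 : ℝ)..t, h s)
    (v : ℝ → ℝ → ℝ → ℝ)
    (hv : ∀ x z t : ℝ, v x z t =
      (x ^ (1 - γ) * Real.exp (γ * g (T - t) + (γ / 2) * h (T - t) * z ^ 2) - 1) / (1 - γ))
    (L : ℝ → ℝ → ℝ → (Fin 2 → ℝ) → ℝ)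
    (hL : ∀ (x z t : ℝ) (p : Fin 2 → ℝ), L x z t p =
      derivWithin (fun s => v x z s) (Set.Icc 0 T) t
        - κ * z * deriv (fun w => v x w t) z
        + (1 / 2) * σZ ^ 2 * deriv (deriv (fun w => v x w t)) z
        + x * z * dot2 α p * deriv (fun y => v y z t) x
        + (1 / 2) * x ^ 2 * dot2 p ((S * Sᵀ) *ᵥ p) * deriv (deriv (fun y => v y z t)) x
        + x * dot2 ![1, -c] ((S * Sᵀ) *ᵥ p) * deriv (fun w => deriv (fun y => v y w t) x) z) :
    (∀ x : ℝ, 0 < x → ∀ z : ℝ, ∀ t ∈ Set.Ico (0 : ℝ) T,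
      (∀ p : Fin 2 → ℝ, L x z t p ≤ 0) ∧
      L x z t (z • (γ⁻¹ • ((S * Sᵀ)⁻¹ *ᵥ α) + h (T - t) • ![1, -c])) = 0) ∧
    (∀ x : ℝ, 0 < x → ∀ z : ℝ, v x z T = (x ^ (1 - γ) - 1) / (1 - γ)) := by
  have hρq : (0:ℝ) < 1 - ρ^2 := by nlinarith
  have hu2 : Real.sqrt (1 - ρ ^ 2) ^ 2 = 1 - ρ ^ 2 := Real.sq_sqrt hρq.le
  have hu0 : 0 < Real.sqrt (1 - ρ ^ 2) := Real.sqrt_pos.mpr hρq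
  set u := Real.sqrt (1 - ρ ^ 2) with hu
  clear_value u
  have h1γ : (1:ℝ) - γ ≠ 0 := by linarith
  have hγne : γ ≠ 0 := ne_of_gt hγ0
  have dot2_self_nonneg : ∀ a : Fin 2 → ℝ, 0 ≤ dot2 a a := fun a => by
    simpa [dot2] using add_nonneg (mul_self_nonneg (a 0)) (mul_self_nonneg (a 1))
  have hST : Sᵀ = !![σ₁, σ₂ * ρ; 0, σ₂ * u] := by
    subst hS; ext i j; fin_cases i <;> fin_cases j <;> simp
  have hA : S * Sᵀ = !![σ₁^2, σ₁*σ₂*ρ; σ₁*σ₂*ρ, σ₂^2] := by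
    rw [hST, hS]
    ext i j
    fin_cases i <;> fin_cases j <;>
      simp [Matrix.mul_apply, Fin.sum_univ_two] <;>
      (first
        | ring1
        | linear_combination (σ₂^2) * hu2
        | linear_combination (-σ₂^2) * hu2)
  have hSinv : S⁻¹ = !![1/σ₁, 0; -(ρ/(σ₁*u)), 1/(σ₂*u)] := by
    apply Matrix.inv_eq_right_inv
    subst hS
    ext i j
    fin_cases i <;> fin_cases j <;>
      simp [Matrix.mul_apply, Fin.sum_univ_two, Matrix.one_apply] <;>
      (try field_simp) <;> (try ring1)
  have hσZ2 : σZ^2 = σ₁^2 - 2*c*(σ₁*σ₂*ρ) + c^2*σ₂^2 := by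
    rw [hσZ, nrm2, Real.sq_sqrt (dot2_self_nonneg _), hST]
    simp [dot2, Matrix.mulVec, dotProduct, Fin.sum_univ_two]
    (first
      | linear_combination (c^2*σ₂^2) * hu2
      | linear_combination (-(c^2*σ₂^2)) * hu2)
  have hM2v : M^2 = α₁^2/σ₁^2 + (σ₁*α₂ - σ₂*ρ*α₁)^2/(σ₁^2*σ₂^2*(1-ρ^2)) := by
    rw [hM, nrm2, Real.sq_sqrt (dot2_self_nonneg _), hSinv, hα]
    simp [dot2, Matrix.mulVec, dotProduct, Fin.sum_univ_two]
    rw [← hu2]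
    field_simp
    ring
  have hAinv : (S * Sᵀ)⁻¹ = !![σ₂^2/(σ₁^2*σ₂^2*(1-ρ^2)), -(σ₁*σ₂*ρ)/(σ₁^2*σ₂^2*(1-ρ^2));
      -(σ₁*σ₂*ρ)/(σ₁^2*σ₂^2*(1-ρ^2)), σ₁^2/(σ₁^2*σ₂^2*(1-ρ^2))] := by
    apply Matrix.inv_eq_right_inv
    rw [hA]
    ext i j
    fin_cases i <;> fin_cases j <;>
      simp [Matrix.mul_apply, Fin.sum_univ_two, Matrix.one_apply] <;>
      (try field_simp) <;> (try ring1)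
  have hdotp : ∀ p : Fin 2 → ℝ, dot2 p ((S * Sᵀ) *ᵥ p)
      = p 0*(σ₁^2*p 0+σ₁*σ₂*ρ*p 1)+p 1*(σ₁*σ₂*ρ*p 0+σ₂^2*p 1) := by
    intro p; rw [hA]
    simp [dot2, Matrix.mulVec, dotProduct, Fin.sum_univ_two]
  have hdotb : ∀ p : Fin 2 → ℝ, dot2 ![1,-c] ((S * Sᵀ) *ᵥ p)
      = (σ₁^2*p 0+σ₁*σ₂*ρ*p 1) - c*(σ₁*σ₂*ρ*p 0+σ₂^2*p 1) := by
    intro p; rw [hA]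
    simp [dot2, Matrix.mulVec, dotProduct, Fin.sum_univ_two]
    ring
  have hdotα : ∀ p : Fin 2 → ℝ, dot2 α p = α₁ * p 0 + α₂ * p 1 := by
    intro p; rw [hα]; simp [dot2]
  have hp01 : ∀ z hs : ℝ,
      (z • (γ⁻¹ • ((S * Sᵀ)⁻¹ *ᵥ α) + hs • ![1, -c])) 0
        = z*((σ₂^2*α₁ - σ₁*σ₂*ρ*α₂)/(σ₁^2*σ₂^2*(1-ρ^2))/γ + hs) ∧
      (z • (γ⁻¹ • ((S * Sᵀ)⁻¹ *ᵥ α) + hs • ![1, -c])) 1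
        = z*((σ₁^2*α₂ - σ₁*σ₂*ρ*α₁)/(σ₁^2*σ₂^2*(1-ρ^2))/γ - c*hs) := by
    intro z hs
    rw [hAinv, hα]
    constructor <;>
    · simp only [Pi.smul_apply, Pi.add_apply, smul_eq_mul, Matrix.mulVec, dotProduct,
        Fin.sum_univ_two, Matrix.cons_val_zero, Matrix.cons_val_one, Matrix.head_cons,
        Matrix.of_apply, Matrix.cons_val', Matrix.empty_val', Matrix.cons_val_fin_one,
        Matrix.vecHead, Matrix.vecTail]
      ring
  have hcont : ContinuousOn h (Icc 0 T) := fun r hr => (hderiv r hr).continuousWithinAt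
  constructor
  · -- HJB inequality and equality
    intro x hx z t ht
    obtain ⟨ht0, htT⟩ := ht
    have htm : t ∈ Icc (0:ℝ) T := ⟨ht0, htT.le⟩
    have hsm : T - t ∈ Icc (0:ℝ) T := ⟨by linarith, by linarith⟩
    haveI : Fact ((T - t) ∈ Icc (0:ℝ) T) := ⟨hsm⟩
    -- x-derivative
    have hDx : ∀ w y : ℝ, 0 < y → deriv (fun y' => v y' w t) y
        = y ^ (-γ) * Real.exp (γ * g (T - t) + γ / 2 * h (T - t) * w ^ 2) := by
      intro w y hy
      have h1 : (fun y' => v y' w t) = fun y' =>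
          (y' ^ (1-γ) * Real.exp (γ * g (T - t) + γ / 2 * h (T - t) * w ^ 2) - 1)/(1-γ) :=
        funext fun y' => hv y' w t
      rw [h1]
      have h2 := (((Real.hasDerivAt_rpow_const (p := 1-γ) (Or.inl hy.ne'))).mul_const
          (Real.exp (γ * g (T - t) + γ / 2 * h (T - t) * w ^ 2))).sub_const (1:ℝ)
      rw [(h2.div_const (1-γ)).deriv, show (1-γ-1:ℝ) = -γ by ring]
      field_simp
    -- second x-derivative
    have hDxx : deriv (deriv (fun y => v y z t)) x
        = -γ * x ^ (-γ-1) * Real.exp (γ * g (T - t) + γ / 2 * h (T - t) * z ^ 2) := by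
      have hev : deriv (fun y => v y z t) =ᶠ[𝓝 x]
          fun y => y ^ (-γ) * Real.exp (γ * g (T - t) + γ / 2 * h (T - t) * z ^ 2) := by
        filter_upwards [eventually_gt_nhds hx] with y hy
        exact hDx z y hy
      rw [hev.deriv_eq]
      have h2 := (Real.hasDerivAt_rpow_const (p := -γ) (Or.inl hx.ne')).mul_const
          (Real.exp (γ * g (T - t) + γ / 2 * h (T - t) * z ^ 2))
      rw [h2.deriv]
    -- z-derivative
    have hinner : ∀ w : ℝ, HasDerivAt (fun w' : ℝ => γ * g (T - t) + γ / 2 * h (T - t) * w' ^ 2)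
        (γ / 2 * h (T - t) * (2 * w)) w := by
      intro w
      have h0 := ((hasDerivAt_pow 2 w).const_mul (γ / 2 * h (T - t))).const_add (γ * g (T - t))
      refine h0.congr_deriv ?_
      push_cast
      ring
    have hDzAt : ∀ w : ℝ, HasDerivAt (fun w' => v x w' t)
        (x ^ (1-γ) * (Real.exp (γ * g (T - t) + γ / 2 * h (T - t) * w ^ 2)
          * (γ / 2 * h (T - t) * (2 * w))) / (1-γ)) w := by
      intro w
      have h1 : (fun w' => v x w' t) = fun w' =>
          (x ^ (1-γ) * Real.exp (γ * g (T - t) + γ / 2 * h (T - t) * w' ^ 2) - 1)/(1-γ) :=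
        funext fun w' => hv x w' t
      rw [h1]
      exact (((hinner w).exp.const_mul (x ^ (1-γ))).sub_const 1).div_const (1-γ)
    have hDz1 : deriv (fun w => v x w t) z
        = x ^ (1-γ) * (Real.exp (γ * g (T - t) + γ / 2 * h (T - t) * z ^ 2)
          * (γ / 2 * h (T - t) * (2 * z))) / (1-γ) := (hDzAt z).deriv
    have hdzfun : deriv (fun w => v x w t) = fun w =>
        x ^ (1-γ) * (Real.exp (γ * g (T - t) + γ / 2 * h (T - t) * w ^ 2)
          * (γ / 2 * h (T - t) * (2 * w))) / (1-γ) := funext fun w => (hDzAt w).deriv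
    have hDzz : deriv (deriv (fun w => v x w t)) z
        = x ^ (1-γ) * ((Real.exp (γ * g (T - t) + γ / 2 * h (T - t) * z ^ 2)
            * (γ / 2 * h (T - t) * (2 * z))) * (γ / 2 * h (T - t) * (2 * z))
          + Real.exp (γ * g (T - t) + γ / 2 * h (T - t) * z ^ 2)
            * (γ / 2 * h (T - t) * 2)) / (1-γ) := by
      rw [hdzfun]
      have hlin : HasDerivAt (fun w : ℝ => γ / 2 * h (T - t) * (2 * w))
          (γ / 2 * h (T - t) * 2) z := by
        simpa using ((hasDerivAt_id z).const_mul (2:ℝ)).const_mul (γ / 2 * h (T - t))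
      exact ((((hinner z).exp.mul hlin).const_mul (x ^ (1-γ))).div_const (1-γ)).deriv
    -- mixed derivative
    have hmix : deriv (fun w => deriv (fun y => v y w t) x) z
        = x ^ (-γ) * (Real.exp (γ * g (T - t) + γ / 2 * h (T - t) * z ^ 2)
          * (γ / 2 * h (T - t) * (2 * z))) := by
      have h1 : (fun w => deriv (fun y => v y w t) x) = fun w =>
          x ^ (-γ) * Real.exp (γ * g (T - t) + γ / 2 * h (T - t) * w ^ 2) :=
        funext fun w => hDx w x hx
      rw [h1]
      exact ((hinner z).exp.const_mul (x ^ (-γ))).deriv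
    -- t-derivative
    have hint : IntervalIntegrable h MeasureTheory.volume 0 (T - t) :=
      (hcont.mono (by
        rw [uIcc_of_le (show (0:ℝ) ≤ T - t by linarith)]
        exact Icc_subset_Icc le_rfl hsm.2)).intervalIntegrable
    have hFTC : HasDerivWithinAt (fun r => ∫ s in (0:ℝ)..r, h s) (h (T - t)) (Icc 0 T) (T - t) :=
      intervalIntegral.integral_hasDerivWithinAt_right hint
        (hcont.stronglyMeasurableAtFilter_nhdsWithin measurableSet_Icc (T - t))
        (hcont (T - t) hsm)
    have hgd : HasDerivWithinAt g (σZ ^ 2 / 2 * h (T - t)) (Icc 0 T) (T - t) := by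
      have h1 : g = fun r => σZ ^ 2 / 2 * ∫ s in (0:ℝ)..r, h s := funext hg
      rw [h1]
      exact hFTC.const_mul _
    have hφ : HasDerivWithinAt (fun r : ℝ => T - r) (-1) (Icc (0:ℝ) T) t :=
      ((hasDerivAt_id t).const_sub T).hasDerivWithinAt
    have hmaps : MapsTo (fun r : ℝ => T - r) (Icc (0:ℝ) T) (Icc (0:ℝ) T) := by
      intro r hr
      simp only [Set.mem_Icc] at hr ⊢
      constructor <;> linarith
    have hgt : HasDerivWithinAt (fun r => g (T - r)) (σZ ^ 2 / 2 * h (T - t) * (-1))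
        (Icc (0:ℝ) T) t := hgd.comp t hφ hmaps
    have hht : HasDerivWithinAt (fun r => h (T - r))
        ((-(2 * κ / γ) * h (T - t) + σZ ^ 2 * h (T - t) ^ 2 + (1 - γ) * M ^ 2 / γ ^ 2) * (-1))
        (Icc (0:ℝ) T) t := (hderiv (T - t) hsm).comp t hφ hmaps
    have hexp : HasDerivWithinAt (fun r => γ * g (T - r) + γ / 2 * h (T - r) * z ^ 2)
        (γ * (σZ ^ 2 / 2 * h (T - t) * (-1))
          + γ / 2 * ((-(2 * κ / γ) * h (T - t) + σZ ^ 2 * h (T - t) ^ 2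
              + (1 - γ) * M ^ 2 / γ ^ 2) * (-1)) * z ^ 2) (Icc (0:ℝ) T) t :=
      (hgt.const_mul γ).add ((hht.const_mul (γ/2)).mul_const (z^2))
    have hvt : HasDerivWithinAt (fun r => v x z r)
        (x ^ (1-γ) * (Real.exp (γ * g (T - t) + γ / 2 * h (T - t) * z ^ 2)
          * (γ * (σZ ^ 2 / 2 * h (T - t) * (-1))
            + γ / 2 * ((-(2 * κ / γ) * h (T - t) + σZ ^ 2 * h (T - t) ^ 2
                + (1 - γ) * M ^ 2 / γ ^ 2) * (-1)) * z ^ 2)) / (1-γ)) (Icc (0:ℝ) T) t := by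
      have h1 : (fun r => v x z r) = fun r =>
          (x ^ (1-γ) * Real.exp (γ * g (T - r) + γ / 2 * h (T - r) * z ^ 2) - 1)/(1-γ) :=
        funext fun r => hv x z r
      rw [h1]
      exact ((hexp.exp.const_mul (x ^ (1-γ))).sub_const 1).div_const (1-γ)
    have hdt : derivWithin (fun r => v x z r) (Icc (0:ℝ) T) t
        = x ^ (1-γ) * (Real.exp (γ * g (T - t) + γ / 2 * h (T - t) * z ^ 2)
          * (γ * (σZ ^ 2 / 2 * h (T - t) * (-1))
            + γ / 2 * ((-(2 * κ / γ) * h (T - t) + σZ ^ 2 * h (T - t) ^ 2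
                + (1 - γ) * M ^ 2 / γ ^ 2) * (-1)) * z ^ 2)) / (1-γ) :=
      hvt.derivWithin (uniqueDiffOn_Icc hT t htm)
    -- rpow facts
    have e1 : x ^ (1 - γ) = x ^ (-γ) * x := by
      rw [show (1 - γ:ℝ) = -γ + 1 by ring, Real.rpow_add hx, Real.rpow_one]
    have e2 : x ^ (-γ - 1) = x ^ (-γ) * x⁻¹ := by
      rw [show (-γ - 1:ℝ) = -γ + (-1) by ring, Real.rpow_add hx, Real.rpow_neg_one]
    -- the key factorization
    have key : ∀ p : Fin 2 → ℝ, L x z t p =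
        x ^ (1-γ) * Real.exp (γ * g (T - t) + γ / 2 * h (T - t) * z ^ 2) *
        (z^2*(κ*h (T - t)) - z^2*(γ/2*σZ^2*(h (T - t))^2) - z^2*(M^2/(2*γ))
          + z*(α₁*p 0+α₂*p 1)
          - γ/2*(p 0*(σ₁^2*p 0+σ₁*σ₂*ρ*p 1)+p 1*(σ₁*σ₂*ρ*p 0+σ₂^2*p 1))
          + γ*h (T - t)*z*((σ₁^2*p 0+σ₁*σ₂*ρ*p 1) - c*(σ₁*σ₂*ρ*p 0+σ₂^2*p 1))) := by
      intro p
      rw [hL, hdt, hDz1, hDzz, hmix, hDx z x hx, hDxx, hdotp p, hdotb p, hdotα p, e1, e2]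
      generalize Real.exp (γ * g (T - t) + γ / 2 * h (T - t) * z ^ 2) = E
      generalize h (T - t) = hh
      generalize x ^ (-γ) = X
      generalize p 0*(σ₁^2*p 0+σ₁*σ₂*ρ*p 1)+p 1*(σ₁*σ₂*ρ*p 0+σ₂^2*p 1) = b1
      generalize (σ₁^2*p 0+σ₁*σ₂*ρ*p 1) - c*(σ₁*σ₂*ρ*p 0+σ₂^2*p 1) = b2
      generalize α₁*p 0+α₂*p 1 = dd
      field_simp
      ring
    have haux := hjb_aux σ₁ σ₂ ρ c α₁ α₂ γ (h (T - t)) z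
      (fun p0 p1 =>
        z^2*(κ*h (T - t)) - z^2*(γ/2*σZ^2*(h (T - t))^2) - z^2*(M^2/(2*γ))
          + z*(α₁*p0+α₂*p1)
          - γ/2*(p0*(σ₁^2*p0+σ₁*σ₂*ρ*p1)+p1*(σ₁*σ₂*ρ*p0+σ₂^2*p1))
          + γ*h (T - t)*z*((σ₁^2*p0+σ₁*σ₂*ρ*p1) - c*(σ₁*σ₂*ρ*p0+σ₂^2*p1)))
      hσ₁.ne' hσ₂.ne' hρq hγ0 (fun p0 p1 => by rw [hκdef, hσZ2, hM2v])
    have hK : 0 < x ^ (1-γ) * Real.exp (γ * g (T - t) + γ / 2 * h (T - t) * z ^ 2) :=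
      mul_pos (Real.rpow_pos_of_pos hx _) (Real.exp_pos _)
    constructor
    · intro p
      rw [key p]
      exact mul_nonpos_iff.mpr (Or.inl ⟨hK.le, haux.1 (p 0) (p 1)⟩)
    · rw [key _, (hp01 z (h (T - t))).1, (hp01 z (h (T - t))).2]
      exact mul_eq_zero_of_right _ haux.2
  · -- terminal condition
    intro x hx z
    rw [hv, sub_self, hh0, hg 0, intervalIntegral.integral_same]
    norm_num
end

section
/- The power-utility ansatz linearizes the HJB equation: suppose φ : ℝ × [0,T] → (0,∞) is twice continuously differentiable in z and continuously differentiable in t, satisfies ∂ₜφ − (κ/γ)·z·∂_zφ + (1/2)σ_Z²·∂²_{zz}φ + ((1−γ)/(2γ²))·M²·z²·φ = 0 on ℝ×[0,T), and φ(z,T) = 1. Then v(x,z,t) := ( φ(z,t)^γ · x^{1−γ} − 1 )/(1−γ) satisfies ∂²_{xx}v(x,z,t) < 0 and the fully nonlinear PDE ∂ₜv − κ z ∂_z v + (1/2)σ_Z² ∂²_{zz}v − (1/2)M² z² (∂_x v)²/∂²_{xx}v − (1/2)σ_Z² (∂²_{xz}v)²/∂²_{xx}v + κ z (∂_x v)(∂²_{xz}v)/∂²_{xx}v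 = 0 for all (x,z,t) ∈ (0,∞)×ℝ×[0,T), together with v(x,z,T) = (x^{1−γ} − 1)/(1−γ). -/
open Matrix Real Set Filter

/-- the power-utility ansatz `v = (φ^γ x^{1−γ} − 1)/(1−γ)` turns a solution
`φ` of the linear PDE into a solution of the fully nonlinear HJB PDE, with `∂²ₓₓv < 0`. -/
theorem stmt_16 (γ κ σZ M T : ℝ)
    (hγ0 : 0 < γ) (hγ1 : γ < 1) (hκ : 0 < κ) (hσZ : 0 < σZ) (hM : 0 < M) (hT : 0 < T)
    (φ : ℝ → ℝ → ℝ)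
    (hφpos : ∀ z : ℝ, ∀ t ∈ Set.Icc (0 : ℝ) T, 0 < φ z t)
    (hφz : ∀ t ∈ Set.Icc (0 : ℝ) T, ContDiff ℝ 2 (fun z => φ z t))
    (hφt : ∀ z : ℝ, ContDiffOn ℝ 1 (fun t => φ z t) (Set.Icc 0 T))
    (hPDE : ∀ z : ℝ, ∀ t ∈ Set.Ico (0 : ℝ) T,
      derivWithin (fun s => φ z s) (Set.Icc 0 T) t
        - (κ / γ) * z * deriv (fun w => φ w t) z
        + (1 / 2) * σZ ^ 2 * deriv (deriv (fun w => φ w t)) z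
        + ((1 - γ) / (2 * γ ^ 2)) * M ^ 2 * z ^ 2 * φ z t = 0)
    (hterm : ∀ z : ℝ, φ z T = 1)
    (v : ℝ → ℝ → ℝ → ℝ)
    (hv : ∀ x z t : ℝ, v x z t = ((φ z t) ^ γ * x ^ (1 - γ) - 1) / (1 - γ)) :
    (∀ x : ℝ, 0 < x → ∀ z : ℝ, ∀ t ∈ Set.Ico (0 : ℝ) T,
      deriv (deriv (fun y => v y z t)) x < 0 ∧
      derivWithin (fun s => v x z s) (Set.Icc 0 T) t
        - κ * z * deriv (fun w => v x w t) z
        + (1 / 2) * σZ ^ 2 * deriv (deriv (fun w => v x w t)) z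
        - (1 / 2) * M ^ 2 * z ^ 2 *
            (deriv (fun y => v y z t) x) ^ 2 / deriv (deriv (fun y => v y z t)) x
        - (1 / 2) * σZ ^ 2 *
            (deriv (fun w => deriv (fun y => v y w t) x) z) ^ 2 /
              deriv (deriv (fun y => v y z t)) x
        + κ * z * deriv (fun y => v y z t) x *
            deriv (fun w => deriv (fun y => v y w t) x) z /
              deriv (deriv (fun y => v y z t)) x = 0) ∧
    (∀ x : ℝ, 0 < x → ∀ z : ℝ, v x z T = (x ^ (1 - γ) - 1) / (1 - γ)) := by
  have h1γ : (1 : ℝ) - γ ≠ 0 := ne_of_gt (by linarith)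
  constructor
  · intro x hx z t ht
    have ht' : t ∈ Set.Icc (0 : ℝ) T := Set.Ico_subset_Icc_self ht
    have hPDE' := hPDE z t ht
    set a := φ z t with ha
    set p := deriv (fun w => φ w t) z with hp
    set q := deriv (deriv (fun w => φ w t)) z with hq
    set r := derivWithin (fun s => φ z s) (Set.Icc 0 T) t with hr
    have hA : 0 < a := hφpos z t ht'
    -- x-derivative (for every slice w)
    have hvx : ∀ w y : ℝ, y ≠ 0 →
        HasDerivAt (fun y => v y w t) (φ w t ^ γ * y ^ (-γ)) y := by
      intro w y hy
      have hfun : (fun y => v y w t)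
          = fun y => (φ w t ^ γ * y ^ (1 - γ) - 1) / (1 - γ) :=
        funext fun y => hv y w t
      rw [hfun]
      have h := (((Real.hasDerivAt_rpow_const (p := 1 - γ)
        (Or.inl hy)).const_mul (φ w t ^ γ)).sub_const 1).div_const (1 - γ)
      refine h.congr_deriv ?_
      rw [show (1 : ℝ) - γ - 1 = -γ by ring, mul_div_assoc, mul_div_cancel_left₀ _ h1γ]
    have h1 : deriv (fun y => v y z t) x = a ^ γ * x ^ (-γ) :=
      (hvx z x hx.ne').deriv
    -- second x-derivative
    have h2 : deriv (deriv (fun y => v y z t)) x = -(γ * a ^ γ * x ^ (-γ - 1)) := by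
      have hev : deriv (fun y => v y z t) =ᶠ[nhds x] fun y => a ^ γ * y ^ (-γ) := by
        filter_upwards [eventually_ne_nhds hx.ne'] with y hy using (hvx z y hy).deriv
      rw [hev.deriv_eq]
      have h := (Real.hasDerivAt_rpow_const (p := -γ) (Or.inl hx.ne')).const_mul (a ^ γ)
      rw [h.deriv]
      ring
    -- z-derivatives
    have hφC : ContDiff ℝ 2 (fun w => φ w t) := hφz t ht'
    have hφdiff : Differentiable ℝ (fun w => φ w t) := hφC.differentiable (by norm_num)
    have hder : ∀ w : ℝ, HasDerivAt (fun w => φ w t) (deriv (fun w => φ w t) w) w :=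
      fun w => (hφdiff w).hasDerivAt
    have hpow : ∀ (c : ℝ) (w : ℝ), HasDerivAt (fun w => φ w t ^ c)
        (deriv (fun w => φ w t) w * c * φ w t ^ (c - 1)) w :=
      fun c w => (hder w).rpow_const (Or.inl (hφpos w t ht').ne')
    have hvz : ∀ w : ℝ, HasDerivAt (fun w => v x w t)
        (deriv (fun w => φ w t) w * γ * φ w t ^ (γ - 1) * x ^ (1 - γ) / (1 - γ)) w := by
      intro w
      have hfun : (fun w => v x w t)
          = fun w => (φ w t ^ γ * x ^ (1 - γ) - 1) / (1 - γ) :=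
        funext fun w => hv x w t
      rw [hfun]
      exact (((hpow γ w).mul_const (x ^ (1 - γ))).sub_const 1).div_const (1 - γ)
    have h3 : deriv (fun w => v x w t) z = p * γ * a ^ (γ - 1) * x ^ (1 - γ) / (1 - γ) :=
      (hvz z).deriv
    -- second z-derivative
    have hφ'C : ContDiff ℝ 1 (deriv (fun w => φ w t)) := by
      have h2' : ContDiff ℝ ((1 : ℕ) + 1) (fun w => φ w t) := by exact_mod_cast hφC
      exact (contDiff_succ_iff_deriv.mp h2').2.2
    have hderq : HasDerivAt (deriv (fun w => φ w t)) q z :=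
      ((hφ'C.differentiable one_ne_zero) z).hasDerivAt
    have h4 : deriv (deriv (fun w => v x w t)) z
        = ((γ * (γ - 1) * a ^ (γ - 2) * p ^ 2 + γ * a ^ (γ - 1) * q)
            * x ^ (1 - γ)) / (1 - γ) := by
      have hfun : deriv (fun w => v x w t)
          = fun w => (deriv (fun w => φ w t) w * (γ * φ w t ^ (γ - 1)))
              * (x ^ (1 - γ) / (1 - γ)) :=
        funext fun w => by rw [(hvz w).deriv]; ring
      rw [hfun]
      have hprod : HasDerivAt
          (fun w => deriv (fun w => φ w t) w * (γ * φ w t ^ (γ - 1)))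
          (q * (γ * a ^ (γ - 1))
            + p * (γ * (p * (γ - 1) * a ^ (γ - 1 - 1)))) z :=
        hderq.mul ((hpow (γ - 1) z).const_mul γ)
      rw [(hprod.mul_const _).deriv, show γ - 1 - 1 = γ - 2 by ring]
      ring
    -- t-derivative
    have hφtD : HasDerivWithinAt (fun s => φ z s) r (Set.Icc 0 T) t :=
      (((hφt z).differentiableOn one_ne_zero) t ht').hasDerivWithinAt
    have h5 : derivWithin (fun s => v x z s) (Set.Icc 0 T) t
        = r * γ * a ^ (γ - 1) * x ^ (1 - γ) / (1 - γ) := by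
      have hfun : (fun s => v x z s)
          = fun s => (φ z s ^ γ * x ^ (1 - γ) - 1) / (1 - γ) :=
        funext fun s => hv x z s
      rw [hfun]
      have h := (((hφtD.rpow_const (p := γ) (Or.inl hA.ne')).mul_const
        (x ^ (1 - γ))).sub_const 1).div_const (1 - γ)
      exact h.derivWithin ((uniqueDiffOn_Icc hT) t ht')
    -- mixed derivative
    have h6 : deriv (fun w => deriv (fun y => v y w t) x) z
        = p * γ * a ^ (γ - 1) * x ^ (-γ) := by
      have hfun : (fun w => deriv (fun y => v y w t) x)
          = fun w => φ w t ^ γ * x ^ (-γ) :=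
        funext fun w => (hvx w x hx.ne').deriv
      rw [hfun]
      exact ((hpow γ z).mul_const (x ^ (-γ))).deriv
    -- positivity facts
    have hAγ : 0 < a ^ γ := Real.rpow_pos_of_pos hA γ
    have hAγ1 : 0 < a ^ (γ - 1) := Real.rpow_pos_of_pos hA _
    have hAγ2 : 0 < a ^ (γ - 2) := Real.rpow_pos_of_pos hA _
    have hX : 0 < x ^ (1 - γ) := Real.rpow_pos_of_pos hx _
    have hY : 0 < x ^ (-γ) := Real.rpow_pos_of_pos hx _
    have hW : 0 < x ^ (-γ - 1) := Real.rpow_pos_of_pos hx _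
    -- rpow identities
    have e1 : a ^ γ = a ^ (γ - 2) * a * a := by
      rw [← Real.rpow_add_one hA.ne', ← Real.rpow_add_one hA.ne']; congr 1; ring
    have e2 : a ^ (γ - 1) = a ^ (γ - 2) * a := by
      rw [← Real.rpow_add_one hA.ne']; congr 1; ring
    have e3 : x ^ (1 - γ) = x ^ (-γ - 1) * x * x := by
      rw [← Real.rpow_add_one hx.ne', ← Real.rpow_add_one hx.ne']; congr 1; ring
    have e4 : x ^ (-γ) = x ^ (-γ - 1) * x := by
      rw [← Real.rpow_add_one hx.ne']; congr 1; ring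
    constructor
    · rw [h2]
      have : 0 < γ * a ^ γ * x ^ (-γ - 1) := by positivity
      linarith
    · -- quotient simplifications
      have hD : -(γ * a ^ γ * x ^ (-γ - 1)) ≠ 0 := by
        have : 0 < γ * a ^ γ * x ^ (-γ - 1) := by positivity
        linarith
      have Q1 : (1 / 2) * M ^ 2 * z ^ 2 * (a ^ γ * x ^ (-γ)) ^ 2
            / (-(γ * a ^ γ * x ^ (-γ - 1)))
          = -((1 / 2) * M ^ 2 * z ^ 2 * a ^ γ * x ^ (1 - γ) / γ) := by
        rw [e1, e3, e4]
        field_simp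
      have Q2 : (1 / 2) * σZ ^ 2 * (p * γ * a ^ (γ - 1) * x ^ (-γ)) ^ 2
            / (-(γ * a ^ γ * x ^ (-γ - 1)))
          = -((1 / 2) * σZ ^ 2 * γ * a ^ (γ - 2) * p ^ 2 * x ^ (1 - γ)) := by
        rw [e1, e2, e3, e4]
        field_simp
      have Q3 : κ * z * (a ^ γ * x ^ (-γ)) * (p * γ * a ^ (γ - 1) * x ^ (-γ))
            / (-(γ * a ^ γ * x ^ (-γ - 1)))
          = -(κ * z * a ^ (γ - 1) * p * x ^ (1 - γ)) := by
        rw [e1, e2, e3, e4]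
        field_simp
      rw [h1, h2, h3, h4, h5, h6, Q1, Q2, Q3]
      have key : r = (κ / γ) * z * p - (1 / 2) * σZ ^ 2 * q
          - ((1 - γ) / (2 * γ ^ 2)) * M ^ 2 * z ^ 2 * a := by linarith
      rw [key, e1, e2]
      field_simp
      ring
  · intro x hx z
    rw [hv, hterm]
    simp [Real.one_rpow]
end

section
/- Under the well-posedness condition α = −(κ/σ_Z²)·ΣΣᵀ(1,−c)ᵀ, the optimal feedback strategy is market-neutral and has the closed form: ‖Σ⁻¹α‖² = κ²/σ_Z², and with 𝔇 := κ²/γ and h(s) := (1−γ)‖Σ⁻¹α‖² / ( κγ + γ²·√𝔇·coth(s·√𝔇) ) for s > 0, for every t ∈ [0,T) and z ∈ ℝ one has z·[ (1/γ)(ΣΣᵀ)⁻¹α + h(T−t)·(1,−c)ᵀ ] = (−κ/σ_Z²) · ( (1 + γ^{−1/2}·coth( (κ/√γ)(T−t) )) / (1 + √γ·coth( (κ/√γ)(T−t) )) ) · z · (1,−c)ᵀ. -/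
open Matrix Real Set Filter

lemma nrm2_sq (a : Fin 2 → ℝ) : nrm2 a ^ 2 = dot2 a a := by
  have : 0 ≤ dot2 a a := by simp only [dot2]; nlinarith [sq_nonneg (a 0), sq_nonneg (a 1)]
  simp [nrm2, Real.sq_sqrt this]

lemma coth_gt_one {x : ℝ} (hx : 0 < x) : 1 < coth x := by
  have hs : 0 < Real.sinh x := Real.sinh_pos_iff.2 hx
  have hc : Real.sinh x < Real.cosh x := Real.sinh_lt_cosh x
  rw [coth, lt_div_iff₀ hs]; linarith


/-- under the well-posedness condition `α = −(κ/σ_Z²)·ΣΣᵀ(1,−c)ᵀ`, one has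
`‖Σ⁻¹α‖² = κ²/σ_Z²` and the optimal feedback strategy is market-neutral with the stated
closed form. -/
theorem stmt_17 (σ₁ σ₂ ρ c α₁ α₂ γ T : ℝ)
    (hσ₁ : 0 < σ₁) (hσ₂ : 0 < σ₂) (hρ₁ : -1 < ρ) (hρ₂ : ρ < 1)
    (S : Matrix (Fin 2) (Fin 2) ℝ)
    (hS : S = !![σ₁, 0; σ₂ * ρ, σ₂ * Real.sqrt (1 - ρ ^ 2)])
    (α : Fin 2 → ℝ) (hα : α = ![α₁, α₂])
    (κ : ℝ) (hκdef : κ = c * α₂ - α₁) (hκ : 0 < κ)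
    (σZ : ℝ) (hσZ : σZ = nrm2 (Sᵀ *ᵥ ![1, -c]))
    (hγ0 : 0 < γ) (hγ1 : γ < 1) (hT : 0 < T)
    (hwp : α = (-(κ / σZ ^ 2)) • ((S * Sᵀ) *ᵥ ![1, -c]))
    (D : ℝ) (hD : D = κ ^ 2 / γ)
    (h : ℝ → ℝ)
    (hh : ∀ s : ℝ, 0 < s → h s =
      (1 - γ) * (nrm2 (S⁻¹ *ᵥ α)) ^ 2 /
        (κ * γ + γ ^ 2 * Real.sqrt D * coth (s * Real.sqrt D))) :
    (nrm2 (S⁻¹ *ᵥ α)) ^ 2 = κ ^ 2 / σZ ^ 2 ∧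
    ∀ t ∈ Set.Ico (0 : ℝ) T, ∀ z : ℝ,
      z • (γ⁻¹ • ((S * Sᵀ)⁻¹ *ᵥ α) + h (T - t) • ![1, -c])
        = ((-κ / σZ ^ 2) *
            ((1 + (Real.sqrt γ)⁻¹ * coth ((κ / Real.sqrt γ) * (T - t))) /
              (1 + Real.sqrt γ * coth ((κ / Real.sqrt γ) * (T - t)))) * z) • ![1, -c] := by
  have hq : 0 < Real.sqrt (1 - ρ ^ 2) := Real.sqrt_pos.2 (by nlinarith)
  set q := Real.sqrt (1 - ρ ^ 2) with hqdef
  -- w = Sᵀ v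
  have hw : Sᵀ *ᵥ ![1, -c] = ![σ₁ - c * (σ₂ * ρ), -(c * (σ₂ * q))] := by
    subst hS
    funext i; fin_cases i <;>
      simp [Matrix.mulVec, dotProduct, Fin.sum_univ_two, Matrix.transpose_apply] <;> ring
  -- σZ² value and positivity
  have hE : σZ ^ 2 = (σ₁ - c * (σ₂ * ρ)) ^ 2 + (c * (σ₂ * q)) ^ 2 := by
    rw [hσZ, nrm2_sq, hw]; simp [dot2]; ring
  have hEpos : 0 < σZ ^ 2 := by
    rw [hE]
    rcases eq_or_ne c 0 with rfl | hc
    · simpa using by positivity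
    · have h2 : 0 < (c * (σ₂ * q)) ^ 2 := by positivity
      nlinarith [sq_nonneg (σ₁ - c * (σ₂ * ρ))]
  have hEne : σZ ^ 2 ≠ 0 := ne_of_gt hEpos
  -- determinant facts
  have hdetS : S.det = σ₁ * (σ₂ * q) := by rw [hS, Matrix.det_fin_two_of]; ring
  have hdetSne : IsUnit S.det := by
    rw [hdetS]; exact isUnit_iff_ne_zero.2 (by positivity)
  have hdetM : IsUnit (S * Sᵀ).det := by
    rw [Matrix.det_mul, Matrix.det_transpose]; exact hdetSne.mul hdetSne
  -- α = -(κ/E) • (S *ᵥ w)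
  have hα' : α = (-(κ / σZ ^ 2)) • (S *ᵥ (Sᵀ *ᵥ ![1, -c])) := by
    rw [hwp, Matrix.mulVec_mulVec]
  -- S⁻¹ α = -(κ/E) • w
  have hSinv : S⁻¹ *ᵥ α = (-(κ / σZ ^ 2)) • (Sᵀ *ᵥ ![1, -c]) := by
    rw [hα', Matrix.mulVec_smul, Matrix.mulVec_mulVec, Matrix.nonsing_inv_mul S hdetSne,
      Matrix.one_mulVec]
  -- (SSᵀ)⁻¹ α = -(κ/E) • v
  have hMinv : (S * Sᵀ)⁻¹ *ᵥ α = (-(κ / σZ ^ 2)) • ![1, -c] := by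
    rw [hwp, Matrix.mulVec_smul, Matrix.mulVec_mulVec, Matrix.nonsing_inv_mul _ hdetM,
      Matrix.one_mulVec]
  -- first conjunct
  have hconj1 : (nrm2 (S⁻¹ *ᵥ α)) ^ 2 = κ ^ 2 / σZ ^ 2 := by
    rw [nrm2_sq, hSinv, hw]
    have : dot2 ((-(κ / σZ ^ 2)) • ![σ₁ - c * (σ₂ * ρ), -(c * (σ₂ * q))])
        ((-(κ / σZ ^ 2)) • ![σ₁ - c * (σ₂ * ρ), -(c * (σ₂ * q))])
        = (κ / σZ ^ 2) ^ 2 * ((σ₁ - c * (σ₂ * ρ)) ^ 2 + (c * (σ₂ * q)) ^ 2) := by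
      simp [dot2]; ring
    rw [this, ← hE]
    field_simp
  refine ⟨hconj1, ?_⟩
  intro t ht z
  obtain ⟨ht0, htT⟩ := ht
  have hs : 0 < T - t := by linarith
  set s := T - t with hsdef
  -- sqrt D = κ / sqrt γ
  have hg : 0 < Real.sqrt γ := Real.sqrt_pos.2 hγ0
  have hg2 : Real.sqrt γ ^ 2 = γ := Real.sq_sqrt hγ0.le
  have hsqrtD : Real.sqrt D = κ / Real.sqrt γ := by
    rw [hD, Real.sqrt_div (sq_nonneg κ), Real.sqrt_sq hκ.le]
  have harg : s * Real.sqrt D = (κ / Real.sqrt γ) * s := by rw [hsqrtD]; ring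
  set C := coth ((κ / Real.sqrt γ) * s) with hC
  have hC1 : 1 < C := coth_gt_one (by positivity)
  have hden : 0 < 1 + Real.sqrt γ * C := by nlinarith
  -- value of h s
  have hhs : h s = (1 - γ) * (κ ^ 2 / σZ ^ 2) /
      (κ * γ + γ ^ 2 * (κ / Real.sqrt γ) * C) := by
    rw [hh s hs, hconj1, harg, hsqrtD]
  -- scalar identity
  have hscal : γ⁻¹ * (-(κ / σZ ^ 2)) + h s
      = (-κ / σZ ^ 2) * ((1 + (Real.sqrt γ)⁻¹ * C) / (1 + Real.sqrt γ * C)) := by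
    rw [hhs]
    have hdne : κ * γ + γ ^ 2 * (κ / Real.sqrt γ) * C ≠ 0 := by
      have heq : κ * γ + γ ^ 2 * (κ / Real.sqrt γ) * C
          = κ * γ * (1 + Real.sqrt γ * C) := by
        field_simp
        linear_combination (-C) * hg2
      rw [heq]; positivity
    field_simp
    linear_combination (-(γ * (Real.sqrt γ + C) * C / σZ ^ 2)) * hg2
  -- vector computation
  calc z • (γ⁻¹ • ((S * Sᵀ)⁻¹ *ᵥ α) + h s • ![1, -c])
      = (z * (γ⁻¹ * (-(κ / σZ ^ 2)) + h s)) • ![1, -c] := by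
        rw [hMinv, smul_smul, ← add_smul, smul_smul]
    _ = ((-κ / σZ ^ 2) *
          ((1 + (Real.sqrt γ)⁻¹ * C) / (1 + Real.sqrt γ * C)) * z) • ![1, -c] := by
        rw [hscal]; ring_nf
end

section
/- Closed form for the integral of the Riccati solution: assume 𝔇 := (κ² − (1−γ)σ_Z²M²)/γ² ≥ 0 and define h by h(s) := (1−γ)M²/( κγ + γ²√𝔇·coth(s√𝔇) ) for s > 0 with h(0) = 0 when 𝔇 > 0, and h(s) := (κ/(γσ_Z²))·(1 − γ/(γ + κs)) when 𝔇 = 0. Then the function g defined by g(t) := κt/(2γ) − (1/2)·log( cosh(t√𝔇) + (κ/(γ√𝔇))·sinh(t√𝔇) ) when 𝔇 > 0, and g(t) := κt/(2γ) − (1/2)·log(1 + κt/γ) when 𝔇 = 0, satisfies g(0) = 0 and g′(t) = (σ_Z²/2)·h(t) for all t ≥ 0; that is, g(t) = (σ_Z²/2)·∫₀ᵗ h(s) ds. -/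
open Matrix Real Set Filter

private lemma stmt19_aux (γ κ σZ M s D C S : ℝ) (hγ0 : 0 < γ) (hκ : 0 < κ)
    (hs : 0 < s) (hs2 : s ^ 2 = D)
    (hrel : (1 - γ) * σZ ^ 2 * M ^ 2 = κ ^ 2 - γ ^ 2 * D)
    (hC : 0 < C) (hS : 0 < S)
    (hφ : 0 < C + (κ / (γ * s)) * S) :
    σZ ^ 2 / 2 * ((1 - γ) * M ^ 2 / (κ * γ + γ ^ 2 * s * (C / S))) =
      κ / (2 * γ) - 1 / 2 * ((S * s + (κ / (γ * s)) * (C * s)) / (C + (κ / (γ * s)) * S)) := by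
  have hden : κ * γ + γ ^ 2 * s * (C / S) ≠ 0 := by positivity
  have hφ' : C + (κ / (γ * s)) * S ≠ 0 := hφ.ne'
  field_simp
  linear_combination (S*(κ*S+γ*s*C))*hrel + (S*(κ*S+γ*s*C)*γ^2)*hs2

/-- closed form for the integral of the Riccati solution: when `𝔇 ≥ 0`,
the explicit function `g` satisfies `g(0) = 0` and `g′(t) = (σ_Z²/2)·h(t)` for `t ≥ 0`,
i.e. `g(t) = (σ_Z²/2)·∫₀ᵗ h(s) ds`. -/
theorem stmt_19 (γ κ σZ M : ℝ)
    (hγ0 : 0 < γ) (hγ1 : γ < 1) (hκ : 0 < κ) (hσZ : 0 < σZ) (hM : 0 < M)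
    (D : ℝ) (hD : D = (κ ^ 2 - (1 - γ) * σZ ^ 2 * M ^ 2) / γ ^ 2) (hDge : 0 ≤ D)
    (h g : ℝ → ℝ)
    (hhpos : 0 < D → (h 0 = 0 ∧ ∀ s : ℝ, 0 < s →
      h s = (1 - γ) * M ^ 2 / (κ * γ + γ ^ 2 * Real.sqrt D * coth (s * Real.sqrt D))))
    (hhzero : D = 0 → ∀ s : ℝ, h s = (κ / (γ * σZ ^ 2)) * (1 - γ / (γ + κ * s)))
    (hgpos : 0 < D → ∀ t : ℝ, g t = κ * t / (2 * γ) -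
      (1 / 2) * Real.log (Real.cosh (t * Real.sqrt D) +
        (κ / (γ * Real.sqrt D)) * Real.sinh (t * Real.sqrt D)))
    (hgzero : D = 0 → ∀ t : ℝ, g t = κ * t / (2 * γ) -
      (1 / 2) * Real.log (1 + κ * t / γ)) :
    g 0 = 0 ∧ ∀ t : ℝ, 0 ≤ t → HasDerivAt g ((σZ ^ 2 / 2) * h t) t := by
  have hγne : γ ≠ 0 := hγ0.ne'
  have hrel : (1 - γ) * σZ ^ 2 * M ^ 2 = κ ^ 2 - γ ^ 2 * D := by
    rw [hD]; field_simp; ring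
  rcases eq_or_lt_of_le hDge with hDeq | hDpos
  · -- D = 0
    have hDeq : D = 0 := hDeq.symm
    have hg := hgzero hDeq
    have hh := hhzero hDeq
    have hgen : g = fun t => κ * t / (2 * γ) - (1 / 2) * Real.log (1 + κ * t / γ) :=
      funext hg
    constructor
    · rw [hg 0]; simp
    · intro t ht
      have hpos : 0 < 1 + κ * t / γ := by positivity
      have hd1 : HasDerivAt (fun x : ℝ => κ * x / (2 * γ)) (κ / (2 * γ)) t := by
        simpa using ((hasDerivAt_id t).const_mul κ).div_const (2 * γ)
      have hd2 : HasDerivAt (fun x : ℝ => 1 + κ * x / γ) (κ / γ) t := by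
        simpa using (((hasDerivAt_id t).const_mul κ).div_const γ).const_add 1
      have hd3 := (hd2.log hpos.ne').const_mul (1 / 2)
      have hd := hd1.sub hd3
      rw [hgen]
      refine hd.congr_deriv ?_; symm
      rw [hh t]
      have hγt : γ + κ * t ≠ 0 := by positivity
      field_simp
  · -- D > 0
    obtain ⟨hh0, hh⟩ := hhpos hDpos
    have hg := hgpos hDpos
    have hs : 0 < Real.sqrt D := Real.sqrt_pos.mpr hDpos
    have hs2 : Real.sqrt D ^ 2 = D := Real.sq_sqrt hDge
    set s := Real.sqrt D with hsdef
    have hgen : g = fun t => κ * t / (2 * γ) -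
        (1 / 2) * Real.log (Real.cosh (t * s) + (κ / (γ * s)) * Real.sinh (t * s)) :=
      funext hg
    constructor
    · rw [hg 0]; simp
    · intro t ht
      have hφpos : 0 < Real.cosh (t * s) + (κ / (γ * s)) * Real.sinh (t * s) := by
        have h1 : 0 < Real.cosh (t * s) := Real.cosh_pos _
        have h2 : 0 ≤ Real.sinh (t * s) := by
          have : (0:ℝ) ≤ t * s := mul_nonneg ht hs.le
          simpa using Real.sinh_nonneg_iff.mpr this
        have h3 : 0 < κ / (γ * s) := by positivity
        nlinarith
      have hd1 : HasDerivAt (fun x : ℝ => κ * x / (2 * γ)) (κ / (2 * γ)) t := by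
        simpa using ((hasDerivAt_id t).const_mul κ).div_const (2 * γ)
      have hdl : HasDerivAt (fun x : ℝ => x * s) s t := hasDerivAt_mul_const s
      have hdc : HasDerivAt (fun x : ℝ => Real.cosh (x * s)) (Real.sinh (t * s) * s) t :=
        (Real.hasDerivAt_cosh (t * s)).comp (h₂ := Real.cosh) t hdl
      have hdsh : HasDerivAt (fun x : ℝ => (κ / (γ * s)) * Real.sinh (x * s))
          ((κ / (γ * s)) * (Real.cosh (t * s) * s)) t :=
        ((Real.hasDerivAt_sinh (t * s)).comp t hdl).const_mul (κ / (γ * s))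
      have hdφ := hdc.add hdsh
      have hd3 := (hdφ.log hφpos.ne').const_mul (1 / 2)
      have hd := hd1.sub hd3
      rw [hgen]
      refine hd.congr_deriv ?_; symm
      rcases eq_or_lt_of_le ht with ht0 | htpos
      · subst t
        rw [hh0]
        simp only [zero_mul, Real.sinh_zero, Real.cosh_zero, mul_zero, add_zero, zero_add,
          mul_comm, div_one, Pi.add_apply]
        field_simp
        ring
      · rw [hh t htpos]
        have hshpos : 0 < Real.sinh (t * s) := Real.sinh_pos_iff.mpr (mul_pos htpos hs)
        have hchpos : 0 < Real.cosh (t * s) := Real.cosh_pos _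
        unfold coth
        exact stmt19_aux γ κ σZ M s D _ _ hγ0 hκ hs hs2 hrel hchpos hshpos hφpos
end
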